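/- arXiv:1404.3488 — 4 statements merged into one kernel-verified Lean document; each statement's English description precedes it below -/
import Mathlib

section
/- Let F be a Minkowski norm on ℝ^n and let ξ ∈ GL(n,ℝ) preserve F, i.e. F(ξy) = F(y) for all y ∈ ℝ^n. If f is a solution of the Landsberg equation of F, then the transformed function ξf is also a solution of the Landsberg equation of F. -/
noncomputable section

open Matrix MeasureTheory

/-- The `i`-th standard basis vector of `ℝⁿ`. -/
def eb (n : ℕ) (i : Fin n) : Fin n → ℝ := Pi.single i 1

/-- Partial derivative of a function on `ℝⁿ` in the `i`-th coordinate direction. -/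
def pd {n : ℕ} (f : (Fin n → ℝ) → ℝ) (i : Fin n) (y : Fin n → ℝ) : ℝ :=
  fderiv ℝ f y (eb n i)

/-- The fundamental tensor `g_{ij}(y) = ½ ∂²(F²)/∂yⁱ∂yʲ`. -/
def hess {n : ℕ} (F : (Fin n → ℝ) → ℝ) (y : Fin n → ℝ) :
    Matrix (Fin n) (Fin n) ℝ :=
  Matrix.of fun i j => (1 / 2 : ℝ) * pd (pd (fun z => F z ^ 2) j) i y

/-- A Minkowski norm on `ℝⁿ`. -/
structure IsMinkowskiNorm {n : ℕ} (F : (Fin n → ℝ) → ℝ) : Prop where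
  continuous : Continuous F
  pos : ∀ y : Fin n → ℝ, y ≠ 0 → 0 < F y
  zero : F 0 = 0
  homog : ∀ lam : ℝ, 0 < lam → ∀ y : Fin n → ℝ, F (lam • y) = lam * F y
  smooth : ContDiffOn ℝ (⊤ : ℕ∞) F {(0 : Fin n → ℝ)}ᶜ
  posdef : ∀ y : Fin n → ℝ, y ≠ 0 → (hess F y).PosDef

/-- The coefficients `Gⁱ(f)(y) = ¼ gⁱˡ(y) ( yᵏ ∂fₖ/∂yˡ − fₗ )`. -/
def Gcoef {n : ℕ} (F : (Fin n → ℝ) → ℝ) (f : (Fin n → ℝ) → Fin n → ℝ)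
    (i : Fin n) (y : Fin n → ℝ) : ℝ :=
  (1 / 4 : ℝ) * ∑ l, (hess F y)⁻¹ i l *
    ((∑ k, y k * pd (fun z => f z k) l y) - f y l)

/-- `f` is a solution of the Landsberg equation of the Minkowski norm `F`:
its components are smooth away from the origin, positively homogeneous of
degree 2, and `yʲ g_{ij}(y) ∂³Gⁱ(f)/∂yᵖ∂y^q∂yʳ = 0` for all `p,q,r` and `y ≠ 0`. -/
def IsLandsbergSolution {n : ℕ} (F : (Fin n → ℝ) → ℝ)
    (f : (Fin n → ℝ) → Fin n → ℝ) : Prop :=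
  (∀ k, ContDiffOn ℝ (⊤ : ℕ∞) (fun z => f z k) {(0 : Fin n → ℝ)}ᶜ) ∧
  (∀ lam : ℝ, 0 < lam → ∀ y : Fin n → ℝ, ∀ k, f (lam • y) k = lam ^ 2 * f y k) ∧
  (∀ y : Fin n → ℝ, y ≠ 0 → ∀ p q r : Fin n,
    ∑ i, ∑ j, y j * hess F y i j * pd (pd (pd (Gcoef F f i) r) q) p y = 0)

namespace LBaux

variable {n : ℕ}

/-- `mulVec` as a continuous linear map. -/
def mclm (ξ : Matrix (Fin n) (Fin n) ℝ) : (Fin n → ℝ) →L[ℝ] (Fin n → ℝ) :=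
  LinearMap.toContinuousLinearMap ξ.mulVecLin

@[simp] lemma mclm_apply (ξ : Matrix (Fin n) (Fin n) ℝ) (y : Fin n → ℝ) :
    mclm ξ y = ξ.mulVec y := rfl

lemma pd_congr_nhds {g₁ g₂ : (Fin n → ℝ) → ℝ} {y : Fin n → ℝ}
    (h : g₁ =ᶠ[nhds y] g₂) (i : Fin n) : pd g₁ i y = pd g₂ i y := by
  unfold pd; rw [h.fderiv_eq]

lemma pd_congr_on {s : Set (Fin n → ℝ)} (hs : IsOpen s) {g₁ g₂ : (Fin n → ℝ) → ℝ}
    (h : ∀ x ∈ s, g₁ x = g₂ x) (i : Fin n) : ∀ x ∈ s, pd g₁ i x = pd g₂ i x :=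
  fun x hx => pd_congr_nhds (Filter.eventuallyEq_of_mem (hs.mem_nhds hx) h) i

lemma diffAt_of_contDiffOn {g : (Fin n → ℝ) → ℝ} {s : Set (Fin n → ℝ)} (hs : IsOpen s)
    (hg : ContDiffOn ℝ (⊤ : ℕ∞) g s) {y : Fin n → ℝ} (hy : y ∈ s) : DifferentiableAt ℝ g y :=
  (hg.differentiableOn (by simp)).differentiableAt (hs.mem_nhds hy)

lemma contDiffOn_pd {g : (Fin n → ℝ) → ℝ} {s : Set (Fin n → ℝ)} (hs : IsOpen s)
    (hg : ContDiffOn ℝ (⊤ : ℕ∞) g s) (i : Fin n) : ContDiffOn ℝ (⊤ : ℕ∞) (pd g i) s :=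
  (hg.fderiv_of_isOpen hs (by simp)).clm_apply contDiffOn_const

lemma pd_comp (ξ : Matrix (Fin n) (Fin n) ℝ) {g : (Fin n → ℝ) → ℝ} {y : Fin n → ℝ}
    (hg : DifferentiableAt ℝ g (ξ.mulVec y)) (p : Fin n) :
    pd (fun x => g (ξ.mulVec x)) p y = ∑ a, ξ a p * pd g a (ξ.mulVec y) := by
  have hgy : DifferentiableAt ℝ g (mclm ξ y) := hg
  have hcomp : fderiv ℝ (g ∘ (mclm ξ)) y = (fderiv ℝ g ((mclm ξ) y)).comp (mclm ξ) := by
    rw [fderiv_comp y hgy (mclm ξ).differentiableAt, (mclm ξ).fderiv]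
  have hfun : (fun x => g (ξ.mulVec x)) = g ∘ (mclm ξ) := rfl
  have hsingle : (mclm ξ) (eb n p) = ∑ a, ξ a p • eb n a := by
    funext b
    simp [mclm, eb, Matrix.mulVec_single, Finset.sum_apply, Pi.single_apply]
  unfold pd
  rw [hfun, hcomp]
  simp only [ContinuousLinearMap.comp_apply]
  rw [hsingle, map_sum]
  simp [smul_eq_mul]

/-- pd of a linear combination, pointwise where differentiable. -/
lemma pd_smul_sum {ι : Type*} (t : Finset ι) (k : ι → ℝ) (h : ι → (Fin n → ℝ) → ℝ)
    {y : Fin n → ℝ} (hh : ∀ a ∈ t, DifferentiableAt ℝ (h a) y) (i : Fin n) :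
    pd (fun x => ∑ a ∈ t, k a * h a x) i y = ∑ a ∈ t, k a * pd (h a) i y := by
  unfold pd
  rw [fderiv_fun_sum (fun a ha => (hh a ha).const_mul (k a))]
  simp only [ContinuousLinearMap.sum_apply]
  refine Finset.sum_congr rfl fun a ha => ?_
  rw [fderiv_const_mul (hh a ha)]; rfl

lemma contDiffOn_smul_sum {ι : Type*} (t : Finset ι) (k : ι → ℝ)
    (h : ι → (Fin n → ℝ) → ℝ) {s : Set (Fin n → ℝ)}
    (hh : ∀ a ∈ t, ContDiffOn ℝ (⊤ : ℕ∞) (h a) s) :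
    ContDiffOn ℝ (⊤ : ℕ∞) (fun x => ∑ a ∈ t, k a * h a x) s :=
  ContDiffOn.sum fun a ha => contDiffOn_const.mul (hh a ha)

lemma contDiffOn_finset_prod {ι : Type*} {E : Type*} [NormedAddCommGroup E]
    [NormedSpace ℝ E] (t : Finset ι) (g : ι → E → ℝ) {s : Set E}
    (hg : ∀ i ∈ t, ContDiffOn ℝ (⊤ : ℕ∞) (g i) s) :
    ContDiffOn ℝ (⊤ : ℕ∞) (fun y => ∏ i ∈ t, g i y) s := by
  classical
  induction t using Finset.induction with
  | empty => simpa using contDiffOn_const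
  | insert _ _ hni ih =>
    rename_i a t'
    simp only [Finset.prod_insert hni]
    exact (hg a (Finset.mem_insert_self a t')).mul
      (ih fun i hi => hg i (Finset.mem_insert_of_mem hi))

lemma contDiffOn_det {M : (Fin n → ℝ) → Matrix (Fin n) (Fin n) ℝ} {s : Set (Fin n → ℝ)}
    (hM : ∀ i j, ContDiffOn ℝ (⊤ : ℕ∞) (fun y => M y i j) s) :
    ContDiffOn ℝ (⊤ : ℕ∞) (fun y => (M y).det) s := by
  simp only [Matrix.det_apply]
  apply ContDiffOn.sum fun σ _ => ?_
  have : (fun y => Equiv.Perm.sign σ • ∏ i, M y (σ i) i)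
      = fun y => ((Equiv.Perm.sign σ : ℤ) : ℝ) * ∏ i, M y (σ i) i := by
    funext y; simp [Units.smul_def, zsmul_eq_mul]
  rw [this]
  exact contDiffOn_const.mul (contDiffOn_finset_prod _ _ fun i _ => hM (σ i) i)

lemma contDiffOn_adjugate {M : (Fin n → ℝ) → Matrix (Fin n) (Fin n) ℝ}
    {s : Set (Fin n → ℝ)}
    (hM : ∀ i j, ContDiffOn ℝ (⊤ : ℕ∞) (fun y => M y i j) s) (i j : Fin n) :
    ContDiffOn ℝ (⊤ : ℕ∞) (fun y => (M y).adjugate i j) s := by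
  simp only [Matrix.adjugate_apply]
  apply contDiffOn_det
  intro a b
  by_cases h : a = j
  · subst h; simpa using contDiffOn_const
  · simp only [Matrix.updateRow_apply, h, if_false]
    exact hM a b

lemma contDiffOn_inv_entry {M : (Fin n → ℝ) → Matrix (Fin n) (Fin n) ℝ}
    {s : Set (Fin n → ℝ)}
    (hM : ∀ i j, ContDiffOn ℝ (⊤ : ℕ∞) (fun y => M y i j) s)
    (hdet : ∀ y ∈ s, (M y).det ≠ 0) (i j : Fin n) :
    ContDiffOn ℝ (⊤ : ℕ∞) (fun y => (M y)⁻¹ i j) s := by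
  have heq : ∀ y ∈ s, ((M y).det)⁻¹ * (M y).adjugate i j = (M y)⁻¹ i j := by
    intro y hy
    rw [Matrix.inv_def]
    simp [Ring.inverse_eq_inv']
  exact (((contDiffOn_det hM).inv hdet).mul (contDiffOn_adjugate hM i j)).congr
    fun y hy => (heq y hy).symm

lemma contDiffOn_hess_entry {F : (Fin n → ℝ) → ℝ} {s : Set (Fin n → ℝ)} (hs : IsOpen s)
    (hF : ContDiffOn ℝ (⊤ : ℕ∞) F s) (i j : Fin n) :
    ContDiffOn ℝ (⊤ : ℕ∞) (fun y => hess F y i j) s := by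
  have hsq : ContDiffOn ℝ (⊤ : ℕ∞) (fun z => F z ^ 2) s := hF.pow 2
  exact contDiffOn_const.mul (contDiffOn_pd hs (contDiffOn_pd hs hsq j) i)

lemma contDiffOn_coord (k : Fin n) {s : Set (Fin n → ℝ)} :
    ContDiffOn ℝ (⊤ : ℕ∞) (fun y : Fin n → ℝ => y k) s :=
  ((ContinuousLinearMap.proj k : (Fin n → ℝ) →L[ℝ] ℝ).contDiff).contDiffOn

section Comp

variable (ξ : Matrix (Fin n) (Fin n) ℝ) (hξ : IsUnit ξ.det)

local notation "S" => ({(0 : Fin n → ℝ)}ᶜ : Set (Fin n → ℝ))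

lemma hS : IsOpen S := isOpen_compl_singleton

include hξ

lemma mulVec_mem {y : Fin n → ℝ} (hy : y ∈ S) : ξ.mulVec y ∈ S := by
  simp only [Set.mem_compl_iff, Set.mem_singleton_iff] at hy ⊢
  intro hc
  apply hy
  have := congrArg (fun v => ξ⁻¹.mulVec v) hc
  simpa [Matrix.mulVec_mulVec, Matrix.nonsing_inv_mul ξ hξ] using this

lemma contDiffOn_comp_mulVec {g : (Fin n → ℝ) → ℝ} (hg : ContDiffOn ℝ (⊤ : ℕ∞) g S) :
    ContDiffOn ℝ (⊤ : ℕ∞) (fun x => g (ξ.mulVec x)) S := by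
  have hmaps : Set.MapsTo (fun x => ξ.mulVec x) S S := fun x hx => mulVec_mem ξ hξ hx
  have hfun : ξ.mulVec = ⇑(mclm ξ) := funext fun x => rfl
  rw [hfun] at hmaps
  exact ContDiffOn.comp hg (((mclm ξ).contDiff).contDiffOn) hmaps

lemma pd_comp_on {g : (Fin n → ℝ) → ℝ} (hg : ContDiffOn ℝ (⊤ : ℕ∞) g S) (r : Fin n)
    {y : Fin n → ℝ} (hy : y ∈ S) :
    pd (fun x => g (ξ.mulVec x)) r y = ∑ c, ξ c r * pd g c (ξ.mulVec y) :=
  pd_comp ξ (diffAt_of_contDiffOn hS hg (mulVec_mem ξ hξ hy)) r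

lemma pd2_comp {g : (Fin n → ℝ) → ℝ} (hg : ContDiffOn ℝ (⊤ : ℕ∞) g S) (q r : Fin n)
    {y : Fin n → ℝ} (hy : y ∈ S) :
    pd (pd (fun x => g (ξ.mulVec x)) r) q y
      = ∑ b, ∑ c, ξ b q * ξ c r * pd (pd g c) b (ξ.mulVec y) := by
  have hD1 : ContDiffOn ℝ (⊤ : ℕ∞) (fun x => ∑ c, ξ c r * pd g c x) S :=
    contDiffOn_smul_sum _ _ _ (fun c _ => contDiffOn_pd hS hg c)
  have h1 : ∀ x ∈ S, pd (fun x => g (ξ.mulVec x)) r x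
      = (fun x => ∑ c, ξ c r * pd g c x) (ξ.mulVec x) :=
    fun x hx => pd_comp_on ξ hξ hg r hx
  rw [pd_congr_on hS h1 q y hy, pd_comp_on ξ hξ hD1 q hy]
  have h3 : ∀ b, pd (fun x => ∑ c, ξ c r * pd g c x) b (ξ.mulVec y)
      = ∑ c, ξ c r * pd (pd g c) b (ξ.mulVec y) := fun b =>
    pd_smul_sum _ _ _ (fun c _ => diffAt_of_contDiffOn hS (contDiffOn_pd hS hg c)
      (mulVec_mem ξ hξ hy)) b
  refine Finset.sum_congr rfl fun b _ => ?_
  rw [h3 b, Finset.mul_sum]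
  exact Finset.sum_congr rfl fun c _ => by ring

lemma pd3_comp {g : (Fin n → ℝ) → ℝ} (hg : ContDiffOn ℝ (⊤ : ℕ∞) g S) (p q r : Fin n)
    {y : Fin n → ℝ} (hy : y ∈ S) :
    pd (pd (pd (fun x => g (ξ.mulVec x)) r) q) p y
      = ∑ a, ∑ b, ∑ c, ξ a p * ξ b q * ξ c r * pd (pd (pd g c) b) a (ξ.mulVec y) := by
  have hD2 : ContDiffOn ℝ (⊤ : ℕ∞)
      (fun x => ∑ b, ∑ c, ξ b q * ξ c r * pd (pd g c) b x) S := by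
    apply ContDiffOn.sum fun b _ => ?_
    apply ContDiffOn.sum fun c _ => ?_
    exact contDiffOn_const.mul (contDiffOn_pd hS (contDiffOn_pd hS hg c) b)
  have h2 : ∀ x ∈ S, pd (pd (fun x => g (ξ.mulVec x)) r) q x
      = (fun x => ∑ b, ∑ c, ξ b q * ξ c r * pd (pd g c) b x) (ξ.mulVec x) :=
    fun x hx => pd2_comp ξ hξ hg q r hx
  have h2' : ∀ x ∈ S, pd (pd (pd (fun x => g (ξ.mulVec x)) r) q) p x
      = pd (fun x => (fun x => ∑ b, ∑ c, ξ b q * ξ c r * pd (pd g c) b x) (ξ.mulVec x)) p x :=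
    pd_congr_on hS h2 p
  rw [h2' y hy, pd_comp_on ξ hξ hD2 p hy]
  have h3 : ∀ a, pd (fun x => ∑ b, ∑ c, ξ b q * ξ c r * pd (pd g c) b x) a (ξ.mulVec y)
      = ∑ b, ∑ c, ξ b q * ξ c r * pd (pd (pd g c) b) a (ξ.mulVec y) := by
    intro a
    have : (fun x => ∑ b, ∑ c, ξ b q * ξ c r * pd (pd g c) b x)
        = fun x => ∑ b, ξ b q * ∑ c, ξ c r * pd (pd g c) b x := by
      funext x; simp only [Finset.mul_sum, mul_assoc]
    rw [this, pd_smul_sum _ _ _ (fun b _ => ?_) a]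
    · refine Finset.sum_congr rfl fun b _ => ?_
      rw [pd_smul_sum _ _ _ (fun c _ => diffAt_of_contDiffOn hS
        (contDiffOn_pd hS (contDiffOn_pd hS hg c) b) (mulVec_mem ξ hξ hy)) a]
      rw [Finset.mul_sum]
      exact Finset.sum_congr rfl fun c _ => by ring
    · exact diffAt_of_contDiffOn hS (contDiffOn_smul_sum _ _ _
        (fun c _ => contDiffOn_pd hS (contDiffOn_pd hS hg c) b)) (mulVec_mem ξ hξ hy)
  refine Finset.sum_congr rfl fun a _ => ?_
  rw [h3 a, Finset.mul_sum]
  refine Finset.sum_congr rfl fun b _ => ?_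
  rw [Finset.mul_sum]
  exact Finset.sum_congr rfl fun c _ => by ring

omit hξ


lemma contDiffOn_Gcoef {F : (Fin n → ℝ) → ℝ} (hFs : ContDiffOn ℝ (⊤ : ℕ∞) F S)
    (hpos : ∀ y ∈ S, (hess F y).PosDef)
    {f : (Fin n → ℝ) → Fin n → ℝ}
    (hf1 : ∀ k, ContDiffOn ℝ (⊤ : ℕ∞) (fun z => f z k) S) (i : Fin n) :
    ContDiffOn ℝ (⊤ : ℕ∞) (Gcoef F f i) S := by
  show ContDiffOn ℝ (⊤ : ℕ∞) (fun y => (1 / 4 : ℝ) * ∑ l, (hess F y)⁻¹ i l *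
    ((∑ k, y k * pd (fun z => f z k) l y) - f y l)) S
  apply contDiffOn_const.mul
  apply ContDiffOn.sum fun l _ => ?_
  refine ContDiffOn.mul ?_ (ContDiffOn.sub ?_ ?_)
  · exact contDiffOn_inv_entry (fun a b => contDiffOn_hess_entry hS hFs a b)
      (fun y hy => ((hpos y hy).det_pos).ne') i l
  · exact ContDiffOn.sum fun k _ =>
      (contDiffOn_coord k).mul (contDiffOn_pd hS (hf1 k) l)
  · exact hf1 l

/-- Triple pd of a linear combination of smooth functions. -/
lemma pd3_smul_sum {ι : Type*} (t : Finset ι) (k : ι → ℝ) (h : ι → (Fin n → ℝ) → ℝ)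
    (hh : ∀ a ∈ t, ContDiffOn ℝ (⊤ : ℕ∞) (h a) S) (p q r : Fin n)
    {y : Fin n → ℝ} (hy : y ∈ S) :
    pd (pd (pd (fun x => ∑ a ∈ t, k a * h a x) r) q) p y
      = ∑ a ∈ t, k a * pd (pd (pd (h a) r) q) p y := by
  have l1 : ∀ x ∈ S, pd (fun x => ∑ a ∈ t, k a * h a x) r x
      = (fun x => ∑ a ∈ t, k a * pd (h a) r x) x := fun x hx =>
    pd_smul_sum t k h (fun a ha => diffAt_of_contDiffOn hS (hh a ha) hx) r
  have l2 : ∀ x ∈ S, pd (pd (fun x => ∑ a ∈ t, k a * h a x) r) q x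
      = (fun x => ∑ a ∈ t, k a * pd (pd (h a) r) q x) x := by
    intro x hx
    rw [pd_congr_on hS l1 q x hx]
    exact pd_smul_sum t k _ (fun a ha => diffAt_of_contDiffOn hS
      (contDiffOn_pd hS (hh a ha) r) hx) q
  rw [pd_congr_on hS l2 p y hy]
  exact pd_smul_sum t k _ (fun a ha => diffAt_of_contDiffOn hS
    (contDiffOn_pd hS (contDiffOn_pd hS (hh a ha) r) q) hy) p

include hξ

variable {F : (Fin n → ℝ) → ℝ}

lemma hess_transform (hFs : ContDiffOn ℝ (⊤ : ℕ∞) F S)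
    (hpres : ∀ y : Fin n → ℝ, F (ξ.mulVec y) = F y)
    {y : Fin n → ℝ} (hy : y ∈ S) :
    hess F y = ξᵀ * hess F (ξ.mulVec y) * ξ := by
  have hsq : ContDiffOn ℝ (⊤ : ℕ∞) (fun z => F z ^ 2) S := hFs.pow 2
  have hfun : (fun z => F z ^ 2) = fun z => F (ξ.mulVec z) ^ 2 := by
    funext z; rw [hpres]
  ext i j
  show (1 / 2 : ℝ) * pd (pd (fun z => F z ^ 2) j) i y = _
  conv_lhs => rw [hfun]
  rw [pd2_comp ξ hξ hsq i j hy]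
  simp only [Matrix.mul_apply, Matrix.transpose_apply, hess, Matrix.of_apply,
    Finset.sum_mul, Finset.mul_sum]
  rw [Finset.sum_comm]
  exact Finset.sum_congr rfl fun b _ => Finset.sum_congr rfl fun c _ => by ring

lemma hess_inv_transform (hFs : ContDiffOn ℝ (⊤ : ℕ∞) F S)
    (hpres : ∀ y : Fin n → ℝ, F (ξ.mulVec y) = F y)
    {y : Fin n → ℝ} (hy : y ∈ S) :
    (hess F y)⁻¹ = ξ⁻¹ * (hess F (ξ.mulVec y))⁻¹ * ξᵀ⁻¹ := by
  rw [hess_transform ξ hξ hFs hpres hy, Matrix.mul_inv_rev, Matrix.mul_inv_rev]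
  rw [Matrix.mul_assoc]


omit hξ in
lemma mulVec_entry (M : Matrix (Fin n) (Fin n) ℝ) (v : Fin n → ℝ) (a : Fin n) :
    ∑ l, M a l * v l = (M.mulVec v) a := by
  simp [Matrix.mulVec, dotProduct]

lemma Gcoef_transform {F : (Fin n → ℝ) → ℝ} (hFs : ContDiffOn ℝ (⊤ : ℕ∞) F S)
    (hpres : ∀ y : Fin n → ℝ, F (ξ.mulVec y) = F y)
    {f : (Fin n → ℝ) → Fin n → ℝ}
    (hf1 : ∀ k, ContDiffOn ℝ (⊤ : ℕ∞) (fun z => f z k) S)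
    {y : Fin n → ℝ} (hy : y ∈ S) (i : Fin n) :
    Gcoef F (fun x j => ∑ m, ξ m j * f (ξ.mulVec x) m) i y
      = ∑ j, ξ⁻¹ i j * Gcoef F f j (ξ.mulVec y) := by
  set z := ξ.mulVec y with hzdef
  have hzS : z ∈ S := mulVec_mem ξ hξ hy
  set W : Fin n → ℝ :=
    fun b => (∑ k, z k * pd (fun x => f x k) b z) - f z b with hW
  have e0 : ∀ m, z m = ∑ k, ξ m k * y k := fun m => by
    rw [hzdef]; simp [Matrix.mulVec, dotProduct]
  have hA : ∀ l, (∑ k, y k * pd (fun x => ∑ m, ξ m k * f (ξ.mulVec x) m) l y)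
      - (∑ m, ξ m l * f z m) = (ξᵀ.mulVec W) l := by
    intro l
    have hpdk : ∀ k, pd (fun x => ∑ m, ξ m k * f (ξ.mulVec x) m) l y
        = ∑ m, ξ m k * ∑ b, ξ b l * pd (fun x => f x m) b z := by
      intro k
      rw [pd_smul_sum _ _ _ (fun m _ => diffAt_of_contDiffOn hS
        (contDiffOn_comp_mulVec ξ hξ (hf1 m)) hy) l]
      exact Finset.sum_congr rfl fun m _ => by
        rw [pd_comp_on ξ hξ (hf1 m) l hy]
    simp only [hpdk]
    have e1 : ∑ k, y k * ∑ m, ξ m k * ∑ b, ξ b l * pd (fun x => f x m) b z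
        = ∑ m, z m * ∑ b, ξ b l * pd (fun x => f x m) b z := by
      simp only [Finset.mul_sum]
      rw [Finset.sum_comm]
      refine Finset.sum_congr rfl fun m _ => ?_
      rw [e0 m, Finset.sum_comm]
      refine Finset.sum_congr rfl fun b _ => ?_
      rw [Finset.sum_mul]
      exact Finset.sum_congr rfl fun k _ => by ring
    rw [e1]
    have e2 : ∑ m, z m * ∑ b, ξ b l * pd (fun x => f x m) b z
        = ∑ b, ξ b l * ∑ m, z m * pd (fun x => f x m) b z := by
      simp only [Finset.mul_sum]
      rw [Finset.sum_comm]
      exact Finset.sum_congr rfl fun b _ => Finset.sum_congr rfl fun m _ => by ring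
    rw [e2]
    have e4 : (ξᵀ.mulVec W) l = ∑ b, ξ b l * W b := by
      simp [Matrix.mulVec, dotProduct, Matrix.transpose_apply]
    rw [e4, hW]
    simp only [mul_sub, Finset.sum_sub_distrib]
  show (1 / 4 : ℝ) * ∑ l, (hess F y)⁻¹ i l *
      ((∑ k, y k * pd (fun x => ∑ m, ξ m k * f (ξ.mulVec x) m) l y)
        - ∑ m, ξ m l * f z m) = ∑ j, ξ⁻¹ i j * Gcoef F f j z
  simp only [hA]
  rw [mulVec_entry _ _ i, hess_inv_transform ξ hξ hFs hpres hy,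
    Matrix.mulVec_mulVec]
  have hmm : ξ⁻¹ * (hess F z)⁻¹ * ξᵀ⁻¹ * ξᵀ = ξ⁻¹ * (hess F z)⁻¹ := by
    rw [Matrix.mul_assoc (ξ⁻¹ * (hess F z)⁻¹),
      Matrix.nonsing_inv_mul ξᵀ (by rw [Matrix.det_transpose]; exact hξ),
      Matrix.mul_one]
  rw [hmm, ← Matrix.mulVec_mulVec, ← mulVec_entry ξ⁻¹ _ i, Finset.mul_sum]
  refine Finset.sum_congr rfl fun j _ => ?_
  rw [← mulVec_entry _ _ j]
  show (1 / 4 : ℝ) * (ξ⁻¹ i j * ∑ l, (hess F z)⁻¹ j l * W l)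
      = ξ⁻¹ i j * ((1 / 4 : ℝ) * ∑ l, (hess F z)⁻¹ j l * W l)
  ring

end Comp

end LBaux

open LBaux in
/-- if a linear isomorphism `ξ` preserves the Minkowski norm `F`, then the
action of `ξ` preserves the solution space of the Landsberg equation of `F`. -/
theorem landsberg_solution_invariant {n : ℕ} (F : (Fin n → ℝ) → ℝ)
    (hF : IsMinkowskiNorm F) (ξ : Matrix (Fin n) (Fin n) ℝ) (hξ : IsUnit ξ.det)
    (hpres : ∀ y : Fin n → ℝ, F (ξ.mulVec y) = F y)
    (f : (Fin n → ℝ) → Fin n → ℝ) (hf : IsLandsbergSolution F f) :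
    IsLandsbergSolution F (fun y j => ∑ i, ξ i j * f (ξ.mulVec y) i) := by
  obtain ⟨hf1, hf2, hf3⟩ := hf
  refine ⟨?_, ?_, ?_⟩
  · -- smoothness
    intro k
    exact contDiffOn_smul_sum _ _ _
      (fun m _ => contDiffOn_comp_mulVec ξ hξ (hf1 m))
  · -- homogeneity
    intro lam hlam y k
    have : ξ.mulVec (lam • y) = lam • ξ.mulVec y := Matrix.mulVec_smul ξ lam y
    simp only [this, hf2 lam hlam (ξ.mulVec y), Finset.mul_sum]
    exact Finset.sum_congr rfl fun m _ => by ring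
  · -- the Landsberg equation
    intro y hy0 p q r
    have hy : y ∈ ({(0 : Fin n → ℝ)}ᶜ : Set (Fin n → ℝ)) :=
      Set.mem_compl_singleton_iff.mpr hy0
    set z := ξ.mulVec y with hzdef
    have hzS : z ∈ ({(0 : Fin n → ℝ)}ᶜ : Set (Fin n → ℝ)) := mulVec_mem ξ hξ hy
    have hz0 : z ≠ 0 := Set.mem_compl_singleton_iff.mp hzS
    have hposS : ∀ x ∈ ({(0 : Fin n → ℝ)}ᶜ : Set (Fin n → ℝ)), (hess F x).PosDef :=
      fun x hx => hF.posdef x (Set.mem_compl_singleton_iff.mp hx)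
    have hG : ∀ j, ContDiffOn ℝ (⊤ : ℕ∞) (Gcoef F f j) ({(0 : Fin n → ℝ)}ᶜ) :=
      fun j => contDiffOn_Gcoef hF.smooth hposS hf1 j
    have hcong : ∀ i, ∀ x ∈ ({(0 : Fin n → ℝ)}ᶜ : Set (Fin n → ℝ)),
        Gcoef F (fun x j => ∑ m, ξ m j * f (ξ.mulVec x) m) i x
          = (fun x => ∑ m, ξ⁻¹ i m * Gcoef F f m (ξ.mulVec x)) x :=
      fun i x hx => Gcoef_transform ξ hξ hF.smooth hpres hf1 hx i
    have hpd3 : ∀ i,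
        pd (pd (pd (Gcoef F (fun x j => ∑ m, ξ m j * f (ξ.mulVec x) m) i) r) q) p y
          = ∑ m, ξ⁻¹ i m * ∑ a, ∑ b, ∑ c, ξ a p * ξ b q * ξ c r *
              pd (pd (pd (Gcoef F f m) c) b) a z := by
      intro i
      have level3 := pd_congr_on hS (pd_congr_on hS (pd_congr_on hS (hcong i) r) q) p
      rw [level3 y hy]
      rw [pd3_smul_sum Finset.univ (fun m => ξ⁻¹ i m)
        (fun m => fun x => Gcoef F f m (ξ.mulVec x))
        (fun m _ => contDiffOn_comp_mulVec ξ hξ (hG m)) p q r hy]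
      refine Finset.sum_congr rfl fun m _ => ?_
      rw [pd3_comp ξ hξ (hG m) p q r hy]
    set P : Fin n → ℝ := fun m => ∑ a, ∑ b, ∑ c, ξ a p * ξ b q * ξ c r *
        pd (pd (pd (Gcoef F f m) c) b) a z with hP
    have hT : ∀ i,
        pd (pd (pd (Gcoef F (fun x j => ∑ m, ξ m j * f (ξ.mulVec x) m) i) r) q) p y
          = (ξ⁻¹.mulVec P) i := by
      intro i
      rw [hpd3 i, mulVec_entry ξ⁻¹ P i]
    have hHy : hess F y = ξᵀ * hess F z * ξ := hess_transform ξ hξ hF.smooth hpres hy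
    have key : ∀ a b c : Fin n,
        ∑ m, ((hess F z).mulVec z) m * pd (pd (pd (Gcoef F f m) c) b) a z = 0 := by
      intro a b c
      have h0 := hf3 z hz0 a b c
      rw [← h0]
      refine Finset.sum_congr rfl fun m _ => ?_
      rw [← mulVec_entry (hess F z) z m, Finset.sum_mul]
      exact Finset.sum_congr rfl fun j _ => by ring
    calc ∑ i, ∑ j, y j * hess F y i j *
          pd (pd (pd (Gcoef F (fun x j => ∑ m, ξ m j * f (ξ.mulVec x) m) i) r) q) p y
        = ((hess F y).mulVec y) ⬝ᵥ (ξ⁻¹.mulVec P) := by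
          rw [dotProduct]
          refine Finset.sum_congr rfl fun i _ => ?_
          rw [hT i, ← mulVec_entry (hess F y) y i, Finset.sum_mul]
          exact Finset.sum_congr rfl fun j _ => by ring
      _ = (ξᵀ.mulVec ((hess F z).mulVec z)) ⬝ᵥ (ξ⁻¹.mulVec P) := by
          rw [hHy, ← Matrix.mulVec_mulVec, ← Matrix.mulVec_mulVec]
      _ = ((hess F z).mulVec z) ⬝ᵥ P := by
          rw [Matrix.mulVec_transpose, Matrix.dotProduct_mulVec,
            Matrix.vecMul_vecMul, Matrix.mul_nonsing_inv ξ hξ, Matrix.vecMul_one]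
      _ = 0 := by
          rw [dotProduct]
          have expand : ∑ m, ((hess F z).mulVec z) m * P m
              = ∑ a, ∑ b, ∑ c, ∑ m, ((hess F z).mulVec z) m *
                  (ξ a p * ξ b q * ξ c r * pd (pd (pd (Gcoef F f m) c) b) a z) :=
            calc ∑ m, ((hess F z).mulVec z) m * P m
                = ∑ m, ∑ a, ∑ b, ∑ c, ((hess F z).mulVec z) m *
                    (ξ a p * ξ b q * ξ c r * pd (pd (pd (Gcoef F f m) c) b) a z) := by
                  refine Finset.sum_congr rfl fun m _ => ?_
                  rw [hP]
                  simp only [Finset.mul_sum]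
              _ = ∑ a, ∑ m, ∑ b, ∑ c, ((hess F z).mulVec z) m *
                    (ξ a p * ξ b q * ξ c r * pd (pd (pd (Gcoef F f m) c) b) a z) :=
                  Finset.sum_comm
              _ = ∑ a, ∑ b, ∑ m, ∑ c, ((hess F z).mulVec z) m *
                    (ξ a p * ξ b q * ξ c r * pd (pd (pd (Gcoef F f m) c) b) a z) :=
                  Finset.sum_congr rfl fun a _ => Finset.sum_comm
              _ = ∑ a, ∑ b, ∑ c, ∑ m, ((hess F z).mulVec z) m *
                    (ξ a p * ξ b q * ξ c r * pd (pd (pd (Gcoef F f m) c) b) a z) :=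
                  Finset.sum_congr rfl fun a _ => Finset.sum_congr rfl fun b _ =>
                    Finset.sum_comm
          rw [expand]
          refine Finset.sum_eq_zero fun a _ => ?_
          refine Finset.sum_eq_zero fun b _ => ?_
          refine Finset.sum_eq_zero fun c _ => ?_
          have : ∑ m, ((hess F z).mulVec z) m *
              (ξ a p * ξ b q * ξ c r * pd (pd (pd (Gcoef F f m) c) b) a z)
              = ξ a p * ξ b q * ξ c r *
                ∑ m, ((hess F z).mulVec z) m * pd (pd (pd (Gcoef F f m) c) b) a z := by
            rw [Finset.mul_sum]
            exact Finset.sum_congr rfl fun m _ => by ring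
          rw [this, key a b c, mul_zero]
end
end

section
/- With the above data, at x = 0 the following hold for all indices i,j,k: (1) ∂_{x^k}a_{ij}(0) = −∂_{x^k}b_{ij}(0); (2) ∂_{x^k}b_{ij}(0) = 0 whenever i,j ≤ n₁ or i,j > n₁; (3) ∂_{x^k}b_{ij}(0) = −∂_{x^k}f_i^j(0) = ∂_{x^k}f̃_j^i(0) whenever i ≤ n₁ < j. -/
noncomputable section

open Matrix MeasureTheory

lemma pd_congr {n : ℕ} {f h : (Fin n → ℝ) → ℝ} (k : Fin n)
    (hfh : f =ᶠ[nhds (0 : Fin n → ℝ)] h) : pd f k 0 = pd h k 0 := by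
  unfold pd; rw [Filter.EventuallyEq.fderiv_eq hfh]

lemma pd_const {n : ℕ} (c : ℝ) (k : Fin n) : pd (fun _ => c) k 0 = 0 := by
  simp [pd]

lemma pd_add {n : ℕ} {f h : (Fin n → ℝ) → ℝ} (k : Fin n)
    (hf : DifferentiableAt ℝ f 0) (hh : DifferentiableAt ℝ h 0) :
    pd (fun x => f x + h x) k 0 = pd f k 0 + pd h k 0 := by
  simp [pd, fderiv_fun_add hf hh]

lemma pd_mul {n : ℕ} {f h : (Fin n → ℝ) → ℝ} (k : Fin n)
    (hf : DifferentiableAt ℝ f 0) (hh : DifferentiableAt ℝ h 0) :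
    pd (fun x => f x * h x) k 0 = pd f k 0 * h 0 + f 0 * pd h k 0 := by
  simp [pd, fderiv_fun_mul hf hh]; ring

lemma pd_sum {n : ℕ} {ι : Type*} (s : Finset ι) (f : ι → (Fin n → ℝ) → ℝ) (k : Fin n)
    (hf : ∀ i ∈ s, DifferentiableAt ℝ (f i) 0) :
    pd (fun x => ∑ i ∈ s, f i x) k 0 = ∑ i ∈ s, pd (f i) k 0 := by
  simp [pd, fderiv_fun_sum hf]

lemma pd_sum_mul {n : ℕ} {ι : Type*} (s : Finset ι) (p q : ι → (Fin n → ℝ) → ℝ) (k : Fin n)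
    (hp : ∀ i ∈ s, DifferentiableAt ℝ (p i) 0) (hq : ∀ i ∈ s, DifferentiableAt ℝ (q i) 0) :
    pd (fun x => ∑ i ∈ s, p i x * q i x) k 0
      = ∑ i ∈ s, (pd (p i) k 0 * q i 0 + p i 0 * pd (q i) k 0) := by
  rw [pd_sum s (fun i x => p i x * q i x) k (fun i hi => ((hp i hi).mul (hq i hi)))]
  exact Finset.sum_congr rfl fun i hi => pd_mul k (hp i hi) (hq i hi)
lemma pd_sub {n : ℕ} {f h : (Fin n → ℝ) → ℝ} (k : Fin n)
    (hf : DifferentiableAt ℝ f 0) (hh : DifferentiableAt ℝ h 0) :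
    pd (fun x => f x - h x) k 0 = pd f k 0 - pd h k 0 := by
  simp [pd, fderiv_fun_sub hf hh]

lemma sum_ite_proj_r {n : ℕ} (P : Prop) [Decidable P] (f : Fin n → ℝ) (b : Fin n) :
    ∑ m, f m * (if m = b ∧ P then (1:ℝ) else 0) = if P then f b else 0 := by
  rw [Finset.sum_eq_single b]
  · by_cases h : P <;> simp [h]
  · intro l _ hl; simp [hl]
  · simp

lemma sum_ite_proj_l {n : ℕ} (P : Prop) [Decidable P] (f : Fin n → ℝ) (b : Fin n) :
    ∑ m, (if m = b ∧ P then (1:ℝ) else 0) * f m = if P then f b else 0 := by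
  rw [Finset.sum_eq_single b]
  · by_cases h : P <;> simp [h]
  · intro l _ hl; simp [hl]
  · simp

lemma ite_sub_ite' {n : ℕ} (m b : Fin n) (c : ℕ) :
    (if m = b then (1:ℝ) else 0) - (if m = b ∧ (b:ℕ) < c then 1 else 0)
      = if m = b ∧ c ≤ (b:ℕ) then 1 else 0 := by
  by_cases h1 : m = b <;> by_cases h2 : (b:ℕ) < c <;>
    simp [h1, h2, not_lt.mp, le_of_not_gt, not_le.mpr]
/-- derivatives at the centre of a normal chart of the coefficient
matrices `a_{ij}`, `b_{ij}` of the two factors of an orthogonal decomposition. -/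
theorem normal_chart_derivatives (n₁ n₂ : ℕ) (hn₁ : 1 ≤ n₁) (hn₂ : 1 ≤ n₂)
    (U : Set (Fin (n₁ + n₂) → ℝ)) (hUopen : IsOpen U) (hU0 : (0 : Fin (n₁ + n₂) → ℝ) ∈ U)
    -- the smooth family of inner products
    (g : (Fin (n₁ + n₂) → ℝ) → Matrix (Fin (n₁ + n₂)) (Fin (n₁ + n₂)) ℝ)
    (hgsym : ∀ x, (g x).IsSymm)
    (hgpos : ∀ x ∈ U, (g x).PosDef)
    (hg0 : g 0 = 1)
    (hgd : ∀ i j k, pd (fun x => g x i j) k 0 = 0)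
    (hgsm : ∀ i j, ContDiffOn ℝ (⊤ : ℕ∞) (fun x => g x i j) U)
    -- the coefficient functions fᵢʲ and f̃ⱼⁱ, vanishing at the origin
    (fm ftm : (Fin (n₁ + n₂) → ℝ) → Fin (n₁ + n₂) → Fin (n₁ + n₂) → ℝ)
    (hfm0 : ∀ i j, fm 0 i j = 0) (hftm0 : ∀ i j, ftm 0 i j = 0)
    (hfmsm : ∀ i j, ContDiffOn ℝ (⊤ : ℕ∞) (fun x => fm x i j) U)
    (hftmsm : ∀ i j, ContDiffOn ℝ (⊤ : ℕ∞) (fun x => ftm x i j) U)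
    -- the spanning vectors of V₁(x) and V₂(x)
    (v w : (Fin (n₁ + n₂) → ℝ) → Fin (n₁ + n₂) → (Fin (n₁ + n₂) → ℝ))
    (hv : ∀ x i k, v x i k = eb (n₁ + n₂) i k + if n₁ ≤ (k : ℕ) then fm x i k else 0)
    (hw : ∀ x j k, w x j k = eb (n₁ + n₂) j k + if (k : ℕ) < n₁ then ftm x j k else 0)
    -- V₁(x) and V₂(x) are g(x)-orthogonal
    (horth : ∀ x ∈ U, ∀ i j : Fin (n₁ + n₂), (i : ℕ) < n₁ → n₁ ≤ (j : ℕ) →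
      v x i ⬝ᵥ (g x).mulVec (w x j) = 0)
    -- the projections pr₁(x), pr₂(x) of the direct sum decomposition ℝⁿ = V₁(x) ⊕ V₂(x)
    (pr₁ pr₂ : (Fin (n₁ + n₂) → ℝ) → Matrix (Fin (n₁ + n₂)) (Fin (n₁ + n₂)) ℝ)
    (hprsum : ∀ x ∈ U, pr₁ x + pr₂ x = 1)
    (hprfix : ∀ x ∈ U, ∀ i : Fin (n₁ + n₂), (i : ℕ) < n₁ → (pr₁ x).mulVec (v x i) = v x i)
    (hprkill : ∀ x ∈ U, ∀ j : Fin (n₁ + n₂), n₁ ≤ (j : ℕ) → (pr₁ x).mulVec (w x j) = 0)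
    (hprsm : ∀ i j, ContDiffOn ℝ (⊤ : ℕ∞) (fun x => pr₁ x i j) U)
    -- a_{ij}(x) = g(x)(pr₁(x)eᵢ, pr₁(x)eⱼ) and b_{ij}(x) = g(x)(pr₂(x)eᵢ, pr₂(x)eⱼ)
    (A B : (Fin (n₁ + n₂) → ℝ) → Fin (n₁ + n₂) → Fin (n₁ + n₂) → ℝ)
    (hA : ∀ x i j, A x i j = (pr₁ x).mulVec (eb (n₁ + n₂) i) ⬝ᵥ
      (g x).mulVec ((pr₁ x).mulVec (eb (n₁ + n₂) j)))
    (hB : ∀ x i j, B x i j = (pr₂ x).mulVec (eb (n₁ + n₂) i) ⬝ᵥ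
      (g x).mulVec ((pr₂ x).mulVec (eb (n₁ + n₂) j))) :
    ∀ i j k : Fin (n₁ + n₂),
      (pd (fun x => A x i j) k 0 = - pd (fun x => B x i j) k 0) ∧
      ((((i : ℕ) < n₁ ∧ (j : ℕ) < n₁) ∨ (n₁ ≤ (i : ℕ) ∧ n₁ ≤ (j : ℕ))) →
        pd (fun x => B x i j) k 0 = 0) ∧
      ((i : ℕ) < n₁ → n₁ ≤ (j : ℕ) →
        pd (fun x => B x i j) k 0 = - pd (fun x => fm x i j) k 0 ∧
        pd (fun x => B x i j) k 0 = pd (fun x => ftm x j i) k 0) := by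

  intro i j k
  have hmem : U ∈ nhds (0 : Fin (n₁ + n₂) → ℝ) := hUopen.mem_nhds hU0
  -- differentiability at 0
  have dg : ∀ a b : Fin (n₁ + n₂), DifferentiableAt ℝ (fun x => g x a b) 0 :=
    fun a b => ((hgsm a b).contDiffAt hmem).differentiableAt (by simp)
  have dfm : ∀ a b : Fin (n₁ + n₂), DifferentiableAt ℝ (fun x => fm x a b) 0 :=
    fun a b => ((hfmsm a b).contDiffAt hmem).differentiableAt (by simp)
  have dftm : ∀ a b : Fin (n₁ + n₂), DifferentiableAt ℝ (fun x => ftm x a b) 0 :=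
    fun a b => ((hftmsm a b).contDiffAt hmem).differentiableAt (by simp)
  have dP : ∀ a b : Fin (n₁ + n₂), DifferentiableAt ℝ (fun x => pr₁ x a b) 0 :=
    fun a b => ((hprsm a b).contDiffAt hmem).differentiableAt (by simp)
  -- values of v, w at 0
  have hv0 : ∀ b, v 0 b = eb (n₁ + n₂) b := fun b => funext fun l => by
    rw [hv]; simp [hfm0]
  have hw0 : ∀ b, w 0 b = eb (n₁ + n₂) b := fun b => funext fun l => by
    rw [hw]; simp [hftm0]
  -- rewriting of v, w components
  have hvfun : ∀ b l, (fun x => v x b l)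
      = fun x => eb (n₁ + n₂) b l + if n₁ ≤ (l : ℕ) then fm x b l else 0 :=
    fun b l => funext fun x => hv x b l
  have hwfun : ∀ b l, (fun x => w x b l)
      = fun x => eb (n₁ + n₂) b l + if (l : ℕ) < n₁ then ftm x b l else 0 :=
    fun b l => funext fun x => hw x b l
  have dv : ∀ b l, DifferentiableAt ℝ (fun x => v x b l) 0 := by
    intro b l; rw [hvfun]
    by_cases hl : n₁ ≤ (l : ℕ)
    · simp only [if_pos hl]; exact (differentiableAt_const _).add (dfm b l)
    · simp only [if_neg hl]; exact differentiableAt_const _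
  have dw : ∀ b l, DifferentiableAt ℝ (fun x => w x b l) 0 := by
    intro b l; rw [hwfun]
    by_cases hl : (l : ℕ) < n₁
    · simp only [if_pos hl]; exact (differentiableAt_const _).add (dftm b l)
    · simp only [if_neg hl]; exact differentiableAt_const _
  -- partial derivatives of v, w components
  have vd : ∀ b l, pd (fun x => v x b l) k 0
      = if n₁ ≤ (l : ℕ) then pd (fun x => fm x b l) k 0 else 0 := by
    intro b l; rw [hvfun]
    by_cases hl : n₁ ≤ (l : ℕ)
    · simp only [if_pos hl]
      rw [pd_add k (differentiableAt_const _) (dfm b l), pd_const]; ring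
    · simp only [if_neg hl, add_zero, pd_const]
  have wd : ∀ b l, pd (fun x => w x b l) k 0
      = if (l : ℕ) < n₁ then pd (fun x => ftm x b l) k 0 else 0 := by
    intro b l; rw [hwfun]
    by_cases hl : (l : ℕ) < n₁
    · simp only [if_pos hl]
      rw [pd_add k (differentiableAt_const _) (dftm b l), pd_const]; ring
    · simp only [if_neg hl, add_zero, pd_const]
  -- pr₁ at 0 is the standard projection
  have P0 : ∀ a b : Fin (n₁ + n₂), pr₁ 0 a b = if a = b ∧ (b : ℕ) < n₁ then 1 else 0 := by
    intro a b
    rcases lt_or_ge (b : ℕ) n₁ with hb | hb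
    · have h := congrFun (hprfix 0 hU0 b hb) a
      rw [hv0] at h
      simpa [Matrix.mulVec, dotProduct, eb, Pi.single_apply, mul_ite,
        Finset.sum_ite_eq', hb] using h
    · have h := congrFun (hprkill 0 hU0 b hb) a
      rw [hw0] at h
      simpa [Matrix.mulVec, dotProduct, eb, Pi.single_apply, mul_ite,
        Finset.sum_ite_eq', not_lt.mpr hb] using h
  -- derivative of pr₁ at 0, columns b < n₁
  have Pd1 : ∀ b : Fin (n₁ + n₂), (b : ℕ) < n₁ → ∀ a,
      pd (fun x => pr₁ x a b) k 0
        = if n₁ ≤ (a : ℕ) then pd (fun x => fm x b a) k 0 else 0 := by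
    intro b hb a
    have heq : (fun x => ∑ l, pr₁ x a l * v x b l) =ᶠ[nhds 0] (fun x => v x b a) := by
      filter_upwards [hmem] with x hx
      simpa [Matrix.mulVec, dotProduct] using congrFun (hprfix x hx b hb) a
    have h := pd_congr k heq
    rw [pd_sum_mul Finset.univ (fun l x => pr₁ x a l) (fun l x => v x b l) k
      (fun l _ => dP a l) (fun l _ => dv b l)] at h
    simp only [vd, P0, hv0] at h
    rw [Finset.sum_add_distrib] at h
    have h1 : ∑ l, pd (fun x => pr₁ x a l) k 0 * eb (n₁ + n₂) b l
        = pd (fun x => pr₁ x a b) k 0 := by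
      simp [eb, Pi.single_apply, mul_ite, Finset.sum_ite_eq']
    have h2 : ∑ l : Fin (n₁ + n₂), (if a = l ∧ (l : ℕ) < n₁ then (1:ℝ) else 0)
        * (if n₁ ≤ (l : ℕ) then pd (fun x => fm x b l) k 0 else 0) = 0 := by
      apply Finset.sum_eq_zero
      intro l _
      by_cases h3 : a = l ∧ (l : ℕ) < n₁
      · simp [h3, not_le.mpr h3.2]
      · simp [h3]
    rw [h1, h2, add_zero] at h
    exact h
  -- derivative of pr₁ at 0, columns b ≥ n₁
  have Pd2 : ∀ b : Fin (n₁ + n₂), n₁ ≤ (b : ℕ) → ∀ a,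
      pd (fun x => pr₁ x a b) k 0
        = -(if (a : ℕ) < n₁ then pd (fun x => ftm x b a) k 0 else 0) := by
    intro b hb a
    have heq : (fun x => ∑ l, pr₁ x a l * w x b l) =ᶠ[nhds 0] (fun _ => (0:ℝ)) := by
      filter_upwards [hmem] with x hx
      simpa [Matrix.mulVec, dotProduct] using congrFun (hprkill x hx b hb) a
    have h := pd_congr k heq
    rw [pd_sum_mul Finset.univ (fun l x => pr₁ x a l) (fun l x => w x b l) k
      (fun l _ => dP a l) (fun l _ => dw b l), pd_const] at h
    simp only [wd, P0, hw0] at h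
    rw [Finset.sum_add_distrib] at h
    have h1 : ∑ l, pd (fun x => pr₁ x a l) k 0 * eb (n₁ + n₂) b l
        = pd (fun x => pr₁ x a b) k 0 := by
      simp [eb, Pi.single_apply, mul_ite, Finset.sum_ite_eq']
    have h2 : ∑ l : Fin (n₁ + n₂), (if a = l ∧ (l : ℕ) < n₁ then (1:ℝ) else 0)
        * (if (l : ℕ) < n₁ then pd (fun x => ftm x b l) k 0 else 0)
        = if (a : ℕ) < n₁ then pd (fun x => ftm x b a) k 0 else 0 := by
      rw [Finset.sum_eq_single a]
      · by_cases h3 : (a : ℕ) < n₁ <;> simp [h3]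
      · intro l _ hl; simp [Ne.symm hl]
      · simp
    rw [h1, h2] at h
    linarith
  -- the orthogonality relation between the derivatives of fm and ftm
  have orth : ∀ a b : Fin (n₁ + n₂), (a : ℕ) < n₁ → n₁ ≤ (b : ℕ) →
      pd (fun x => fm x a b) k 0 + pd (fun x => ftm x b a) k 0 = 0 := by
    intro a b ha hb
    have heq : (fun x => ∑ m, v x a m * ∑ l, g x m l * w x b l)
        =ᶠ[nhds 0] (fun _ => (0:ℝ)) := by
      filter_upwards [hmem] with x hx
      simpa [Matrix.mulVec, dotProduct] using horth x hx a b ha hb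
    have h := pd_congr k heq
    rw [pd_sum_mul Finset.univ (fun m x => v x a m)
      (fun m x => ∑ l, g x m l * w x b l) k (fun m _ => dv a m)
      (fun m _ => DifferentiableAt.fun_sum fun l _ => (dg m l).mul (dw b l)), pd_const] at h
    have hq0 : ∀ m, (∑ l, g 0 m l * w 0 b l) = if m = b then (1:ℝ) else 0 := by
      intro m
      simp [hg0, Matrix.one_apply, hw0, eb, Pi.single_apply, ite_mul, mul_ite,
        Finset.sum_ite_eq]
    have hqd : ∀ m, pd (fun x => ∑ l, g x m l * w x b l) k 0
        = pd (fun x => w x b m) k 0 := by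
      intro m
      rw [pd_sum_mul Finset.univ (fun l x => g x m l) (fun l x => w x b l) k
        (fun l _ => dg m l) (fun l _ => dw b l)]
      simp [hgd, hg0, Matrix.one_apply, ite_mul, Finset.sum_ite_eq]
    simp only [hq0, hqd, vd, wd, hv0] at h
    rw [Finset.sum_add_distrib] at h
    have h1 : ∑ m : Fin (n₁ + n₂), (if n₁ ≤ (m : ℕ) then pd (fun x => fm x a m) k 0 else 0)
        * (if m = b then (1:ℝ) else 0) = pd (fun x => fm x a b) k 0 := by
      rw [Finset.sum_eq_single b]
      · simp [hb]
      · intro l _ hl; simp [hl]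
      · simp
    have h2 : ∑ m : Fin (n₁ + n₂), eb (n₁ + n₂) a m
        * (if (m : ℕ) < n₁ then pd (fun x => ftm x b m) k 0 else 0)
        = pd (fun x => ftm x b a) k 0 := by
      rw [Finset.sum_eq_single a]
      · simp [eb, Pi.single_apply, ha]
      · intro l _ hl; simp [eb, Pi.single_apply, hl]
      · simp
    rw [h1, h2] at h
    exact h
  -- derivative of A at 0
  have hq0A : ∀ m, (∑ l, g 0 m l * pr₁ 0 l j)
      = if m = j ∧ (j : ℕ) < n₁ then (1:ℝ) else 0 := by
    intro m
    simp only [hg0, Matrix.one_apply, P0, ite_mul, one_mul, zero_mul]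
    rw [Finset.sum_ite_eq Finset.univ m
      (fun l => if l = j ∧ (j : ℕ) < n₁ then (1:ℝ) else 0)]
    simp
  have hqdA : ∀ m, pd (fun x => ∑ l, g x m l * pr₁ x l j) k 0
      = pd (fun x => pr₁ x m j) k 0 := by
    intro m
    rw [pd_sum_mul Finset.univ (fun l x => g x m l) (fun l x => pr₁ x l j) k
      (fun l _ => dg m l) (fun l _ => dP l j)]
    simp [hgd, hg0, Matrix.one_apply, ite_mul, Finset.sum_ite_eq]
  have hAd : pd (fun x => A x i j) k 0
      = (if (j : ℕ) < n₁ then pd (fun x => pr₁ x j i) k 0 else 0)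
        + (if (i : ℕ) < n₁ then pd (fun x => pr₁ x i j) k 0 else 0) := by
    have heq : (fun x => A x i j) = fun x => ∑ m, pr₁ x m i * ∑ l, g x m l * pr₁ x l j :=
      funext fun x => by
        rw [hA]
        simp [Matrix.mulVec, dotProduct, eb, Pi.single_apply, mul_ite, Finset.sum_ite_eq']
    rw [heq, pd_sum_mul Finset.univ (fun m x => pr₁ x m i)
      (fun m x => ∑ l, g x m l * pr₁ x l j) k (fun m _ => dP m i)
      (fun m _ => DifferentiableAt.fun_sum fun l _ => (dg m l).mul (dP l j))]
    simp only [hqdA]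
    simp only [hq0A]
    simp only [P0]
    rw [Finset.sum_add_distrib,
      sum_ite_proj_r ((j : ℕ) < n₁) (fun m => pd (fun x => pr₁ x m i) k 0) j,
      sum_ite_proj_l ((i : ℕ) < n₁) (fun m => pd (fun x => pr₁ x m j) k 0) i]
  -- derivative of B at 0
  have hpr2 : ∀ x ∈ U, ∀ a b : Fin (n₁ + n₂),
      pr₂ x a b = (if a = b then (1:ℝ) else 0) - pr₁ x a b := by
    intro x hx a b
    have h := congrFun (congrFun (hprsum x hx) a) b
    simp only [Matrix.add_apply, Matrix.one_apply] at h
    linarith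
  have heqB : (fun x => B x i j) =ᶠ[nhds 0] fun x =>
      ∑ m, ((if m = i then (1:ℝ) else 0) - pr₁ x m i)
        * ∑ l, g x m l * ((if l = j then (1:ℝ) else 0) - pr₁ x l j) := by
    filter_upwards [hmem] with x hx
    rw [hB]
    simp [Matrix.mulVec, dotProduct, eb, Pi.single_apply, mul_ite,
      Finset.sum_ite_eq', hpr2 x hx]
  have hpsub : ∀ (a b : Fin (n₁ + n₂)),
      pd (fun x => (if a = b then (1:ℝ) else 0) - pr₁ x a b) k 0
        = -pd (fun x => pr₁ x a b) k 0 := by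
    intro a b
    rw [pd_sub k (differentiableAt_const _) (dP a b), pd_const]; ring
  have hqdB : ∀ m, pd (fun x => ∑ l, g x m l
      * ((if l = j then (1:ℝ) else 0) - pr₁ x l j)) k 0
        = -pd (fun x => pr₁ x m j) k 0 := by
    intro m
    rw [pd_sum_mul Finset.univ (fun l x => g x m l)
      (fun l x => (if l = j then (1:ℝ) else 0) - pr₁ x l j) k
      (fun l _ => dg m l) (fun l _ => (differentiableAt_const _).sub (dP l j))]
    simp only [hgd, hpsub, hg0, Matrix.one_apply, zero_mul, ite_mul, one_mul, zero_add]
    rw [Finset.sum_ite_eq Finset.univ m (fun l => -pd (fun x => pr₁ x l j) k 0)]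
    simp
  have hq0B : ∀ m, (∑ l, g 0 m l * ((if l = j then (1:ℝ) else 0) - pr₁ 0 l j))
      = if m = j ∧ n₁ ≤ (j : ℕ) then (1:ℝ) else 0 := by
    intro m
    simp only [hg0, Matrix.one_apply, P0, ite_mul, one_mul, zero_mul]
    rw [Finset.sum_ite_eq Finset.univ m
      (fun l => (if l = j then (1:ℝ) else 0) - (if l = j ∧ (j : ℕ) < n₁ then 1 else 0))]
    simp only [Finset.mem_univ, if_true]
    exact ite_sub_ite' m j n₁
  have hBd : pd (fun x => B x i j) k 0
      = (if n₁ ≤ (j : ℕ) then -pd (fun x => pr₁ x j i) k 0 else 0)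
        + (if n₁ ≤ (i : ℕ) then -pd (fun x => pr₁ x i j) k 0 else 0) := by
    rw [pd_congr k heqB, pd_sum_mul Finset.univ
      (fun m x => (if m = i then (1:ℝ) else 0) - pr₁ x m i)
      (fun m x => ∑ l, g x m l * ((if l = j then (1:ℝ) else 0) - pr₁ x l j)) k
      (fun m _ => (differentiableAt_const _).sub (dP m i))
      (fun m _ => DifferentiableAt.fun_sum fun l _ =>
        (dg m l).mul ((differentiableAt_const _).sub (dP l j)))]
    simp only [hqdB, hq0B, hpsub]
    simp only [P0, ite_sub_ite']
    rw [Finset.sum_add_distrib,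
      sum_ite_proj_r (n₁ ≤ (j : ℕ)) (fun m => -pd (fun x => pr₁ x m i) k 0) j,
      sum_ite_proj_l (n₁ ≤ (i : ℕ)) (fun m => -pd (fun x => pr₁ x m j) k 0) i]
  -- final case analysis
  rcases lt_or_ge (i : ℕ) n₁ with hi | hi <;> rcases lt_or_ge (j : ℕ) n₁ with hj | hj
  · rw [hAd, hBd, Pd1 i hi j, Pd1 j hj i]
    exact ⟨by simp [hi, hj, not_le.mpr hi, not_le.mpr hj],
      by simp [hi, hj, not_le.mpr hi, not_le.mpr hj],
      fun _ hj' => absurd hj' (not_le.mpr hj)⟩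
  · rw [hAd, hBd, Pd1 i hi j, Pd2 j hj i]
    have ho := orth i j hi hj
    refine ⟨?_, ?_, fun _ _ => ⟨?_, ?_⟩⟩
    · simp only [if_pos hi, if_pos hj, if_neg (not_lt.mpr hj), if_neg (not_le.mpr hi)]
      linarith
    · rintro (⟨_, h⟩ | ⟨h, _⟩)
      exacts [absurd h (not_lt.mpr hj), absurd h (not_le.mpr hi)]
    · simp only [if_pos hi, if_pos hj, if_neg (not_lt.mpr hj), if_neg (not_le.mpr hi)]
      linarith
    · simp only [if_pos hi, if_pos hj, if_neg (not_lt.mpr hj), if_neg (not_le.mpr hi)]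
      linarith
  · rw [hAd, hBd, Pd2 i hi j, Pd1 j hj i]
    have ho := orth j i hj hi
    refine ⟨?_, ?_, fun hi' _ => absurd hi' (not_lt.mpr hi)⟩
    · simp only [if_pos hi, if_pos hj, if_neg (not_lt.mpr hi), if_neg (not_le.mpr hj)]
      linarith
    · rintro (⟨h, _⟩ | ⟨_, h⟩)
      exacts [absurd h (not_lt.mpr hi), absurd h (not_le.mpr hj)]
  · rw [hAd, hBd, Pd2 i hi j, Pd2 j hj i]
    refine ⟨?_, ?_, fun hi' _ => absurd hi' (not_lt.mpr hi)⟩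
    · simp [not_lt.mpr hi, not_lt.mpr hj, hi, hj]
    · intro _
      simp [not_lt.mpr hi, not_lt.mpr hj, hi, hj]
end
end

section
/- At the point 𝐲 = (a,0,…,0,a') the Hessian matrix (g_{ij}(𝐲)) is invertible and its inverse (g^{ij}(𝐲)) is given by: g^{11} = (L₂ + 2a'²L₂₂)/(L₁L₂ − 2LL₁₂); g^{nn} = (L₁ + 2a²L₁₁)/(L₁L₂ − 2LL₁₂); g^{1n} = g^{n1} = −2aa'L₁₂/(L₁L₂ − 2LL₁₂); g^{ii} = 1/L₁ for 2 ≤ i ≤ n₁; g^{ii} = 1/L₂ for n₁+1 ≤ i ≤ n−1; and g^{ij} = 0 for all other pairs i ≠ j. -/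
noncomputable section

open Matrix MeasureTheory

/-- Partial derivative of a function of two real variables in the first variable. -/
def D1 (L : ℝ × ℝ → ℝ) (p : ℝ × ℝ) : ℝ := fderiv ℝ L p (1, 0)

/-- Partial derivative of a function of two real variables in the second variable. -/
def D2 (L : ℝ × ℝ → ℝ) (p : ℝ × ℝ) : ℝ := fderiv ℝ L p (0, 1)

/-- The closed first quadrant of `ℝ²` minus the origin. -/
def quadrant : Set (ℝ × ℝ) := {p : ℝ × ℝ | 0 ≤ p.1 ∧ 0 ≤ p.2 ∧ p ≠ 0}

/-- The `(α₁,α₂)`-norm `F(y) = √(L(α₁², α₂²))` on `ℝ^(n₁+n₂)`, where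
`α₁² = Σ_{i ≤ n₁} (yⁱ)²` and `α₂² = Σ_{i > n₁} (yⁱ)²`. -/
def Fa (n₁ n₂ : ℕ) (L : ℝ × ℝ → ℝ) : (Fin (n₁ + n₂) → ℝ) → ℝ :=
  fun y => Real.sqrt (L (∑ i, if i.val < n₁ then y i ^ 2 else 0,
                         ∑ i, if n₁ ≤ i.val then y i ^ 2 else 0))

def qmap (n₁ n₂ : ℕ) (y : Fin (n₁ + n₂) → ℝ) : ℝ × ℝ :=
  (∑ i, if i.val < n₁ then y i ^ 2 else 0, ∑ i, if n₁ ≤ i.val then y i ^ 2 else 0)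

def qder (n₁ n₂ : ℕ) (y : Fin (n₁ + n₂) → ℝ) : (Fin (n₁ + n₂) → ℝ) →L[ℝ] ℝ × ℝ :=
  (∑ i ∈ Finset.univ.filter (fun i : Fin (n₁ + n₂) => i.val < n₁),
      (2 * y i) • ContinuousLinearMap.proj i).prod
  (∑ i ∈ Finset.univ.filter (fun i : Fin (n₁ + n₂) => n₁ ≤ i.val),
      (2 * y i) • ContinuousLinearMap.proj i)

lemma sq_hasFDerivAt {m : ℕ} (i : Fin m) (y : Fin m → ℝ) :
    HasFDerivAt (fun z : Fin m → ℝ => z i ^ 2)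
      ((2 * y i) • (ContinuousLinearMap.proj i : (Fin m → ℝ) →L[ℝ] ℝ)) y := by
  have h := ((ContinuousLinearMap.proj i : (Fin m → ℝ) →L[ℝ] ℝ).hasFDerivAt (x := y)).mul
    ((ContinuousLinearMap.proj i : (Fin m → ℝ) →L[ℝ] ℝ).hasFDerivAt (x := y))
  have hfun : (fun z : Fin m → ℝ => z i ^ 2) = fun z : Fin m → ℝ => z i * z i := by
    funext z; ring
  rw [hfun]
  refine h.congr_fderiv ?_
  ext v
  simp [two_mul, mul_comm]
  ring

lemma qmap_hasFDerivAt {n₁ n₂ : ℕ} (y : Fin (n₁ + n₂) → ℝ) :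
    HasFDerivAt (qmap n₁ n₂) (qder n₁ n₂ y) y := by
  apply HasFDerivAt.prodMk
  · have hfun : (fun y : Fin (n₁ + n₂) → ℝ => ∑ i, if i.val < n₁ then y i ^ 2 else 0)
        = fun y : Fin (n₁ + n₂) → ℝ =>
            ∑ i ∈ Finset.univ.filter (fun i : Fin (n₁ + n₂) => i.val < n₁), y i ^ 2 := by
      funext y; rw [Finset.sum_filter]
    exact hfun ▸ HasFDerivAt.fun_sum (fun i _ => sq_hasFDerivAt i y)
  · have hfun : (fun y : Fin (n₁ + n₂) → ℝ => ∑ i, if n₁ ≤ i.val then y i ^ 2 else 0)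
        = fun y : Fin (n₁ + n₂) → ℝ =>
            ∑ i ∈ Finset.univ.filter (fun i : Fin (n₁ + n₂) => n₁ ≤ i.val), y i ^ 2 := by
      funext y; rw [Finset.sum_filter]
    exact hfun ▸ HasFDerivAt.fun_sum (fun i _ => sq_hasFDerivAt i y)

lemma qder_eb {n₁ n₂ : ℕ} (y : Fin (n₁ + n₂) → ℝ) (j : Fin (n₁ + n₂)) :
    qder n₁ n₂ y (eb (n₁ + n₂) j)
      = if j.val < n₁ then ((2 * y j : ℝ), (0:ℝ)) else ((0:ℝ), (2 * y j : ℝ)) := by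
  have key : ∀ (s : Finset (Fin (n₁ + n₂))),
      (∑ i ∈ s, (2 * y i) • (ContinuousLinearMap.proj i : (Fin (n₁+n₂) → ℝ) →L[ℝ] ℝ))
        (eb (n₁ + n₂) j) = if j ∈ s then 2 * y j else 0 := by
    intro s
    rw [ContinuousLinearMap.sum_apply]
    have : ∀ i ∈ s, ((2 * y i) • (ContinuousLinearMap.proj i : (Fin (n₁+n₂) → ℝ) →L[ℝ] ℝ))
        (eb (n₁ + n₂) j) = if i = j then 2 * y j else 0 := by
      intro i _
      simp only [ContinuousLinearMap.smul_apply, ContinuousLinearMap.proj_apply, eb,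
        Pi.single_apply, smul_eq_mul]
      by_cases h : i = j <;> simp [h, eq_comm]
    rw [Finset.sum_congr rfl this, Finset.sum_ite_eq' s j (fun _ => 2 * y j)]
  by_cases hj : j.val < n₁
  · have hj2 : ¬ (n₁ ≤ j.val) := by omega
    simp [qder, key, hj, hj2]
  · have hj2 : n₁ ≤ j.val := by omega
    simp [qder, key, hj, hj2]

lemma qmap_mem_quadrant {n₁ n₂ : ℕ} {y : Fin (n₁ + n₂) → ℝ} (hy : y ≠ 0) :
    qmap n₁ n₂ y ∈ quadrant := by
  simp only [qmap, quadrant, Set.mem_setOf_eq]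
  refine ⟨Finset.sum_nonneg fun i _ => ?_, Finset.sum_nonneg fun i _ => ?_, ?_⟩
  · positivity
  · positivity
  · intro h0
    apply hy
    have h1 : (∑ i, if (i : Fin (n₁+n₂)).val < n₁ then y i ^ 2 else 0) = 0 := by
      have := congrArg Prod.fst h0; simpa using this
    have h2 : (∑ i, if n₁ ≤ (i : Fin (n₁+n₂)).val then y i ^ 2 else 0) = 0 := by
      have := congrArg Prod.snd h0; simpa using this
    funext i
    by_cases hi : i.val < n₁
    · have := (Finset.sum_eq_zero_iff_of_nonneg (fun i _ => by positivity)).1 h1 i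
        (Finset.mem_univ i)
      simp only [hi, if_true] at this
      exact pow_eq_zero_iff (by norm_num) |>.1 this
    · have := (Finset.sum_eq_zero_iff_of_nonneg (fun i _ => by positivity)).1 h2 i
        (Finset.mem_univ i)
      simp only [if_pos (by omega : n₁ ≤ i.val)] at this
      exact pow_eq_zero_iff (by norm_num) |>.1 this

lemma Fa_eq (n₁ n₂ : ℕ) (L : ℝ × ℝ → ℝ) (y : Fin (n₁ + n₂) → ℝ) :
    Fa n₁ n₂ L y = Real.sqrt (L (qmap n₁ n₂ y)) := rfl

section Main

variable {n₁ n₂ : ℕ} {L : ℝ × ℝ → ℝ} {V : Set (ℝ × ℝ)}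

lemma pd_sq (hVopen : IsOpen V) (hVsub : quadrant ⊆ V) (hLsm : ContDiffOn ℝ (⊤ : ℕ∞) L V)
    (hLpos : ∀ p ∈ V, 0 < L p) (j : Fin (n₁ + n₂)) (y : Fin (n₁ + n₂) → ℝ) (hy : y ≠ 0) :
    pd (fun z => Fa n₁ n₂ L z ^ 2) j y
      = 2 * y j * (if j.val < n₁ then D1 L (qmap n₁ n₂ y) else D2 L (qmap n₁ n₂ y)) := by
  have hqV : qmap n₁ n₂ y ∈ V := hVsub (qmap_mem_quadrant hy)
  have hLd : DifferentiableAt ℝ L (qmap n₁ n₂ y) :=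
    (hLsm.contDiffAt (hVopen.mem_nhds hqV)).differentiableAt (by simp)
  have hev : (fun z => Fa n₁ n₂ L z ^ 2) =ᶠ[nhds y] (fun z => L (qmap n₁ n₂ z)) := by
    filter_upwards [isOpen_compl_singleton.mem_nhds (by simpa using hy :
      y ∈ ({0} : Set (Fin (n₁+n₂) → ℝ))ᶜ)] with z hz
    have hz' : z ≠ 0 := by simpa using hz
    rw [Fa_eq, Real.sq_sqrt (hLpos _ (hVsub (qmap_mem_quadrant hz'))).le]
  have hc : HasFDerivAt (fun z => L (qmap n₁ n₂ z))
      ((fderiv ℝ L (qmap n₁ n₂ y)).comp (qder n₁ n₂ y)) y :=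
    hLd.hasFDerivAt.comp y (qmap_hasFDerivAt y)
  rw [pd, hev.fderiv_eq, hc.fderiv]
  rw [ContinuousLinearMap.comp_apply, qder_eb]
  by_cases hj : j.val < n₁
  · have h2 : ((2 * y j : ℝ), (0:ℝ)) = (2 * y j) • ((1:ℝ), (0:ℝ)) := by
      simp [Prod.smul_mk]
    simp only [hj, if_true, h2, _root_.map_smul, smul_eq_mul, D1]
  · have h2 : ((0:ℝ), (2 * y j : ℝ)) = (2 * y j) • ((0:ℝ), (1:ℝ)) := by
      simp [Prod.smul_mk]
    simp only [hj, if_false, h2, _root_.map_smul, smul_eq_mul, D2]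

end Main
section Main2

variable {n₁ n₂ : ℕ} {L : ℝ × ℝ → ℝ} {V : Set (ℝ × ℝ)}

lemma hess_entry (hVopen : IsOpen V) (hVsub : quadrant ⊆ V) (hLsm : ContDiffOn ℝ (⊤ : ℕ∞) L V)
    (hLpos : ∀ p ∈ V, 0 < L p) (Y : Fin (n₁ + n₂) → ℝ) (hY0 : Y ≠ 0)
    (i j : Fin (n₁ + n₂)) :
    hess (Fa n₁ n₂ L) Y i j
      = (if j = i then (if j.val < n₁ then D1 L (qmap n₁ n₂ Y) else D2 L (qmap n₁ n₂ Y)) else 0)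
        + 2 * Y i * Y j *
          (if i.val < n₁ then
            (if j.val < n₁ then D1 (D1 L) (qmap n₁ n₂ Y) else D1 (D2 L) (qmap n₁ n₂ Y))
          else
            (if j.val < n₁ then D2 (D1 L) (qmap n₁ n₂ Y) else D2 (D2 L) (qmap n₁ n₂ Y))) := by
  have hqV : qmap n₁ n₂ Y ∈ V := hVsub (qmap_mem_quadrant hY0)
  have hL1 : ContDiffOn ℝ 1 (fderiv ℝ L) V := hLsm.fderiv_of_isOpen hVopen (WithTop.coe_le_coe.mpr le_top)
  have hfd : DifferentiableAt ℝ (fderiv ℝ L) (qmap n₁ n₂ Y) :=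
    (hL1.contDiffAt (hVopen.mem_nhds hqV)).differentiableAt one_ne_zero
  have hD1d : DifferentiableAt ℝ (D1 L) (qmap n₁ n₂ Y) :=
    hfd.clm_apply (differentiableAt_const _)
  have hD2d : DifferentiableAt ℝ (D2 L) (qmap n₁ n₂ Y) :=
    hfd.clm_apply (differentiableAt_const _)
  have hev : pd (fun z => Fa n₁ n₂ L z ^ 2) j =ᶠ[nhds Y]
      (fun y => 2 * y j * (if j.val < n₁ then D1 L (qmap n₁ n₂ y) else D2 L (qmap n₁ n₂ y))) := by
    filter_upwards [isOpen_compl_singleton.mem_nhds (by simpa using hY0 :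
      Y ∈ ({0} : Set (Fin (n₁+n₂) → ℝ))ᶜ)] with z hz
    exact pd_sq hVopen hVsub hLsm hLpos j z (by simpa using hz)
  have heb : ∀ k : Fin (n₁ + n₂), eb (n₁ + n₂) k j = if j = k then (1:ℝ) else 0 := by
    intro k; simp [eb, Pi.single_apply]
  by_cases hj : j.val < n₁
  · have hfun : (fun y : Fin (n₁+n₂) → ℝ => 2 * y j *
        (if j.val < n₁ then D1 L (qmap n₁ n₂ y) else D2 L (qmap n₁ n₂ y)))
        = fun y => 2 * y j * D1 L (qmap n₁ n₂ y) := by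
      simp only [hj, if_true]
    have h1 : HasFDerivAt (fun y : Fin (n₁+n₂) → ℝ => 2 * y j)
        ((2:ℝ) • (ContinuousLinearMap.proj j : (Fin (n₁+n₂) → ℝ) →L[ℝ] ℝ)) Y :=
      ((ContinuousLinearMap.proj j : (Fin (n₁+n₂) → ℝ) →L[ℝ] ℝ).hasFDerivAt).const_mul 2
    have h2 : HasFDerivAt (fun y : Fin (n₁+n₂) → ℝ => D1 L (qmap n₁ n₂ y))
        ((fderiv ℝ (D1 L) (qmap n₁ n₂ Y)).comp (qder n₁ n₂ Y)) Y :=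
      hD1d.hasFDerivAt.comp Y (qmap_hasFDerivAt Y)
    have hprod := h1.fun_mul h2
    rw [show hess (Fa n₁ n₂ L) Y i j
        = (1/2 : ℝ) * pd (pd (fun z => Fa n₁ n₂ L z ^ 2) j) i Y from rfl]
    rw [pd, hev.fderiv_eq, hfun, hprod.fderiv]
    simp only [ContinuousLinearMap.add_apply, ContinuousLinearMap.smul_apply,
      ContinuousLinearMap.comp_apply, ContinuousLinearMap.proj_apply, smul_eq_mul,
      qder_eb, heb]
    by_cases hi : i.val < n₁
    · have h3 : ((2 * Y i : ℝ), (0:ℝ)) = (2 * Y i) • ((1:ℝ), (0:ℝ)) := by simp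
      rw [if_pos hi, if_pos hi, if_pos hj, h3, _root_.map_smul]
      show (1/2 : ℝ) * (2 * Y j * (2 * Y i * (fderiv ℝ (D1 L) (qmap n₁ n₂ Y)) (1,0))
        + D1 L (qmap n₁ n₂ Y) * (2 * (if j = i then (1:ℝ) else 0))) = _
      by_cases hij : j = i <;> simp [hij, hi, hj, D1, D2] <;> ring
    · have h3 : ((0:ℝ), (2 * Y i : ℝ)) = (2 * Y i) • ((0:ℝ), (1:ℝ)) := by simp
      rw [if_neg hi, if_neg hi, if_pos hj, h3, _root_.map_smul]
      show (1/2 : ℝ) * (2 * Y j * (2 * Y i * (fderiv ℝ (D1 L) (qmap n₁ n₂ Y)) (0,1))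
        + D1 L (qmap n₁ n₂ Y) * (2 * (if j = i then (1:ℝ) else 0))) = _
      by_cases hij : j = i
      · exact absurd (hij ▸ hj) hi
      · simp [hij, hi, hj, D1, D2]; ring
  · have hfun : (fun y : Fin (n₁+n₂) → ℝ => 2 * y j *
        (if j.val < n₁ then D1 L (qmap n₁ n₂ y) else D2 L (qmap n₁ n₂ y)))
        = fun y => 2 * y j * D2 L (qmap n₁ n₂ y) := by
      simp only [hj, if_false]
    have h1 : HasFDerivAt (fun y : Fin (n₁+n₂) → ℝ => 2 * y j)
        ((2:ℝ) • (ContinuousLinearMap.proj j : (Fin (n₁+n₂) → ℝ) →L[ℝ] ℝ)) Y :=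
      ((ContinuousLinearMap.proj j : (Fin (n₁+n₂) → ℝ) →L[ℝ] ℝ).hasFDerivAt).const_mul 2
    have h2 : HasFDerivAt (fun y : Fin (n₁+n₂) → ℝ => D2 L (qmap n₁ n₂ y))
        ((fderiv ℝ (D2 L) (qmap n₁ n₂ Y)).comp (qder n₁ n₂ Y)) Y :=
      hD2d.hasFDerivAt.comp Y (qmap_hasFDerivAt Y)
    have hprod := h1.fun_mul h2
    rw [show hess (Fa n₁ n₂ L) Y i j
        = (1/2 : ℝ) * pd (pd (fun z => Fa n₁ n₂ L z ^ 2) j) i Y from rfl]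
    rw [pd, hev.fderiv_eq, hfun, hprod.fderiv]
    simp only [ContinuousLinearMap.add_apply, ContinuousLinearMap.smul_apply,
      ContinuousLinearMap.comp_apply, ContinuousLinearMap.proj_apply, smul_eq_mul,
      qder_eb, heb]
    by_cases hi : i.val < n₁
    · have h3 : ((2 * Y i : ℝ), (0:ℝ)) = (2 * Y i) • ((1:ℝ), (0:ℝ)) := by simp
      rw [if_pos hi, if_pos hi, if_neg hj, h3, _root_.map_smul]
      show (1/2 : ℝ) * (2 * Y j * (2 * Y i * (fderiv ℝ (D2 L) (qmap n₁ n₂ Y)) (1,0))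
        + D2 L (qmap n₁ n₂ Y) * (2 * (if j = i then (1:ℝ) else 0))) = _
      by_cases hij : j = i
      · exact absurd (hij.symm ▸ hi) hj
      · simp [hij, hi, hj, D1, D2]; ring
    · have h3 : ((0:ℝ), (2 * Y i : ℝ)) = (2 * Y i) • ((0:ℝ), (1:ℝ)) := by simp
      rw [if_neg hi, if_neg hi, if_neg hj, h3, _root_.map_smul]
      show (1/2 : ℝ) * (2 * Y j * (2 * Y i * (fderiv ℝ (D2 L) (qmap n₁ n₂ Y)) (0,1))
        + D2 L (qmap n₁ n₂ Y) * (2 * (if j = i then (1:ℝ) else 0))) = _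
      by_cases hij : j = i <;> simp [hij, hi, hj, D1, D2] <;> ring

end Main2

section Euler

variable {L : ℝ × ℝ → ℝ} {V : Set (ℝ × ℝ)}

lemma mem_quadrant_of_pos {p : ℝ × ℝ} (hp1 : 0 < p.1) (hp2 : 0 < p.2) : p ∈ quadrant := by
  refine ⟨hp1.le, hp2.le, fun h => ?_⟩
  rw [h] at hp1; exact lt_irrefl 0 hp1

lemma euler1 (hVopen : IsOpen V) (hVsub : quadrant ⊆ V) (hLsm : ContDiffOn ℝ (⊤ : ℕ∞) L V)
    (hLhom : ∀ lam : ℝ, 0 < lam → ∀ p ∈ quadrant, L (lam * p.1, lam * p.2) = lam * L p)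
    (p : ℝ × ℝ) (hp1 : 0 < p.1) (hp2 : 0 < p.2) :
    p.1 * D1 L p + p.2 * D2 L p = L p := by
  have hpq : p ∈ quadrant := mem_quadrant_of_pos hp1 hp2
  have hpV : p ∈ V := hVsub hpq
  have hdiff : DifferentiableAt ℝ L p :=
    (hLsm.contDiffAt (hVopen.mem_nhds hpV)).differentiableAt (by simp)
  have hs : HasDerivAt (fun lam : ℝ => lam • p) ((1:ℝ) • p) 1 :=
    (hasDerivAt_id 1).smul_const p
  have h1 : HasDerivAt (fun lam : ℝ => L (lam • p)) (fderiv ℝ L p ((1:ℝ) • p)) 1 := by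
    have hd : HasFDerivAt L (fderiv ℝ L p) ((fun lam : ℝ => lam • p) 1) := by
      simpa using hdiff.hasFDerivAt
    have := hd.comp_hasDerivAt 1 hs
    exact this
  have heq : (fun lam : ℝ => L (lam • p)) =ᶠ[nhds 1] (fun lam : ℝ => lam * L p) := by
    filter_upwards [Ioi_mem_nhds (by norm_num : (0:ℝ) < 1)] with lam hlam
    have := hLhom lam hlam p hpq
    simpa [Prod.smul_def, smul_eq_mul] using this
  have h1' : HasDerivAt (fun lam : ℝ => lam * L p) (fderiv ℝ L p ((1:ℝ) • p)) 1 :=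
    h1.congr_of_eventuallyEq heq.symm
  have h2 : HasDerivAt (fun lam : ℝ => lam * L p) (L p) 1 := by
    simpa using (hasDerivAt_id (1:ℝ)).mul_const (L p)
  have hkey : fderiv ℝ L p ((1:ℝ) • p) = L p := h1'.unique h2
  have hdecomp : ((1:ℝ) • p) = p.1 • ((1:ℝ), (0:ℝ)) + p.2 • ((0:ℝ), (1:ℝ)) := by
    simp [Prod.ext_iff]
  rw [hdecomp, map_add, _root_.map_smul, _root_.map_smul] at hkey
  simpa [D1, D2, smul_eq_mul] using hkey

lemma fderiv_D_apply (hVopen : IsOpen V) (hLsm : ContDiffOn ℝ (⊤ : ℕ∞) L V)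
    {p : ℝ × ℝ} (hpV : p ∈ V) (u v : ℝ × ℝ) :
    fderiv ℝ (fun q => fderiv ℝ L q u) p v = fderiv ℝ (fderiv ℝ L) p v u := by
  have hL1 : ContDiffOn ℝ 1 (fderiv ℝ L) V := hLsm.fderiv_of_isOpen hVopen (WithTop.coe_le_coe.mpr le_top)
  have hfd : DifferentiableAt ℝ (fderiv ℝ L) p :=
    (hL1.contDiffAt (hVopen.mem_nhds hpV)).differentiableAt one_ne_zero
  rw [fderiv_clm_apply hfd (differentiableAt_const u)]
  simp

lemma Dsymm (hVopen : IsOpen V) (hLsm : ContDiffOn ℝ (⊤ : ℕ∞) L V)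
    {p : ℝ × ℝ} (hpV : p ∈ V) : D1 (D2 L) p = D2 (D1 L) p := by
  have hL1 : ContDiffOn ℝ 1 (fderiv ℝ L) V := hLsm.fderiv_of_isOpen hVopen (WithTop.coe_le_coe.mpr le_top)
  have hfd : DifferentiableAt ℝ (fderiv ℝ L) p :=
    (hL1.contDiffAt (hVopen.mem_nhds hpV)).differentiableAt one_ne_zero
  have hsymm := second_derivative_symmetric_of_eventually (f := L) (f' := fderiv ℝ L)
    (x := p) (f'' := fderiv ℝ (fderiv ℝ L) p) ?_ hfd.hasFDerivAt
  · have e1 : D1 (D2 L) p = fderiv ℝ (fderiv ℝ L) p (1,0) (0,1) := by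
      rw [D1]
      exact fderiv_D_apply hVopen hLsm hpV (0,1) (1,0)
    have e2 : D2 (D1 L) p = fderiv ℝ (fderiv ℝ L) p (0,1) (1,0) := by
      rw [D2]
      exact fderiv_D_apply hVopen hLsm hpV (1,0) (0,1)
    rw [e1, e2, hsymm]
  · filter_upwards [hVopen.mem_nhds hpV] with q hq
    exact ((hLsm.contDiffAt (hVopen.mem_nhds hq)).differentiableAt (by simp)).hasFDerivAt

lemma euler2 (hVopen : IsOpen V) (hVsub : quadrant ⊆ V) (hLsm : ContDiffOn ℝ (⊤ : ℕ∞) L V)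
    (hLhom : ∀ lam : ℝ, 0 < lam → ∀ p ∈ quadrant, L (lam * p.1, lam * p.2) = lam * L p)
    (p : ℝ × ℝ) (hp1 : 0 < p.1) (hp2 : 0 < p.2) :
    (p.1 * D1 (D1 L) p + p.2 * D1 (D2 L) p = 0) ∧
    (p.1 * D2 (D1 L) p + p.2 * D2 (D2 L) p = 0) := by
  have hpV : p ∈ V := hVsub (mem_quadrant_of_pos hp1 hp2)
  have hL1 : ContDiffOn ℝ 1 (fderiv ℝ L) V := hLsm.fderiv_of_isOpen hVopen (WithTop.coe_le_coe.mpr le_top)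
  have hfd : DifferentiableAt ℝ (fderiv ℝ L) p :=
    (hL1.contDiffAt (hVopen.mem_nhds hpV)).differentiableAt one_ne_zero
  have hD1d : DifferentiableAt ℝ (D1 L) p := hfd.clm_apply (differentiableAt_const _)
  have hD2d : DifferentiableAt ℝ (D2 L) p := hfd.clm_apply (differentiableAt_const _)
  have hfst : HasFDerivAt (fun q : ℝ × ℝ => q.1)
      (ContinuousLinearMap.fst ℝ ℝ ℝ) p := (ContinuousLinearMap.fst ℝ ℝ ℝ).hasFDerivAt
  have hsnd : HasFDerivAt (fun q : ℝ × ℝ => q.2)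
      (ContinuousLinearMap.snd ℝ ℝ ℝ) p := (ContinuousLinearMap.snd ℝ ℝ ℝ).hasFDerivAt
  have hEf : HasFDerivAt (fun q : ℝ × ℝ => q.1 * D1 L q + q.2 * D2 L q)
      ((p.1 • fderiv ℝ (D1 L) p + D1 L p • ContinuousLinearMap.fst ℝ ℝ ℝ)
        + (p.2 • fderiv ℝ (D2 L) p + D2 L p • ContinuousLinearMap.snd ℝ ℝ ℝ)) p :=
    (hfst.mul hD1d.hasFDerivAt).add (hsnd.mul hD2d.hasFDerivAt)
  have hopen : IsOpen {q : ℝ × ℝ | 0 < q.1 ∧ 0 < q.2} :=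
    (isOpen_lt continuous_const continuous_fst).inter (isOpen_lt continuous_const continuous_snd)
  have heq : (fun q : ℝ × ℝ => q.1 * D1 L q + q.2 * D2 L q) =ᶠ[nhds p] L := by
    filter_upwards [hopen.mem_nhds ⟨hp1, hp2⟩] with q hq
    exact euler1 hVopen hVsub hLsm hLhom q hq.1 hq.2
  have hfder : fderiv ℝ (fun q : ℝ × ℝ => q.1 * D1 L q + q.2 * D2 L q) p = fderiv ℝ L p :=
    heq.fderiv_eq
  rw [hEf.fderiv] at hfder
  constructor
  · have := congrArg (fun (T : ℝ × ℝ →L[ℝ] ℝ) => T (1, 0)) hfder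
    simp only [ContinuousLinearMap.add_apply, ContinuousLinearMap.smul_apply,
      ContinuousLinearMap.coe_fst', ContinuousLinearMap.coe_snd', smul_eq_mul] at this
    have hd1 : fderiv ℝ (D1 L) p (1,0) = D1 (D1 L) p := rfl
    have hd2 : fderiv ℝ (D2 L) p (1,0) = D1 (D2 L) p := rfl
    rw [hd1, hd2] at this
    have hrhs : fderiv ℝ L p (1,0) = D1 L p := rfl
    rw [hrhs] at this
    linarith [this]
  · have := congrArg (fun (T : ℝ × ℝ →L[ℝ] ℝ) => T (0, 1)) hfder
    simp only [ContinuousLinearMap.add_apply, ContinuousLinearMap.smul_apply,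
      ContinuousLinearMap.coe_fst', ContinuousLinearMap.coe_snd', smul_eq_mul] at this
    have hd1 : fderiv ℝ (D1 L) p (0,1) = D2 (D1 L) p := rfl
    have hd2 : fderiv ℝ (D2 L) p (0,1) = D2 (D2 L) p := rfl
    rw [hd1, hd2] at this
    have hrhs : fderiv ℝ L p (0,1) = D2 L p := rfl
    rw [hrhs] at this
    linarith [this]

end Euler

/-- the inverse fundamental tensor of an `(α₁,α₂)`-norm at `𝐲 = (a,0,…,0,a')`. -/
theorem hess_inv_at_special_point (n₁ n₂ : ℕ) (hn₁ : 1 ≤ n₁) (hn₂ : 1 ≤ n₂)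
    (L : ℝ × ℝ → ℝ) (V : Set (ℝ × ℝ)) (hVopen : IsOpen V) (hVsub : quadrant ⊆ V)
    (hLsm : ContDiffOn ℝ (⊤ : ℕ∞) L V) (hLpos : ∀ p ∈ V, 0 < L p)
    (hLhom : ∀ lam : ℝ, 0 < lam → ∀ p ∈ quadrant, L (lam * p.1, lam * p.2) = lam * L p)
    (hMink : IsMinkowskiNorm (Fa n₁ n₂ L))
    (i₀ iN : Fin (n₁ + n₂)) (hi₀ : (i₀ : ℕ) = 0) (hiN : (iN : ℕ) = n₁ + n₂ - 1)
    (a a' : ℝ) (ha : a ≠ 0) (ha' : a' ≠ 0) (hnorm : a ^ 2 + a' ^ 2 = 1)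
    (Y : Fin (n₁ + n₂) → ℝ)
    (hY : Y = fun i => if i = i₀ then a else if i = iN then a' else 0)
    (l0 l1 l2 l11 l12 l22 : ℝ)
    (hl0 : l0 = L (a ^ 2, a' ^ 2)) (hl1 : l1 = D1 L (a ^ 2, a' ^ 2))
    (hl2 : l2 = D2 L (a ^ 2, a' ^ 2)) (hl11 : l11 = D1 (D1 L) (a ^ 2, a' ^ 2))
    (hl12 : l12 = D2 (D1 L) (a ^ 2, a' ^ 2)) (hl22 : l22 = D2 (D2 L) (a ^ 2, a' ^ 2))
    (hl1pos : 0 < l1) (hl2pos : 0 < l2) (hdet : 0 < l1 * l2 - 2 * l0 * l12)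
    (Ginv : Matrix (Fin (n₁ + n₂)) (Fin (n₁ + n₂)) ℝ)
    (hGinv : Ginv = (hess (Fa n₁ n₂ L) Y)⁻¹) :
    IsUnit (hess (Fa n₁ n₂ L) Y).det ∧
    Ginv i₀ i₀ = (l2 + 2 * a' ^ 2 * l22) / (l1 * l2 - 2 * l0 * l12) ∧
    Ginv iN iN = (l1 + 2 * a ^ 2 * l11) / (l1 * l2 - 2 * l0 * l12) ∧
    Ginv i₀ iN = -(2 * a * a' * l12) / (l1 * l2 - 2 * l0 * l12) ∧
    Ginv iN i₀ = -(2 * a * a' * l12) / (l1 * l2 - 2 * l0 * l12) ∧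
    (∀ i : Fin (n₁ + n₂), 1 ≤ (i : ℕ) → (i : ℕ) < n₁ → Ginv i i = 1 / l1) ∧
    (∀ i : Fin (n₁ + n₂), n₁ ≤ (i : ℕ) → (i : ℕ) < n₁ + n₂ - 1 → Ginv i i = 1 / l2) ∧
    (∀ i j : Fin (n₁ + n₂), i ≠ j → ¬((i = i₀ ∧ j = iN) ∨ (i = iN ∧ j = i₀)) →
      Ginv i j = 0) := by
  -- basic index facts
  have hlt0 : (i₀ : ℕ) < n₁ := by omega
  have hgeN : n₁ ≤ (iN : ℕ) := by omega
  have hne : i₀ ≠ iN := fun h => by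
    have := congrArg Fin.val h; omega
  have hY0 : Y ≠ 0 := by
    intro h
    apply ha
    have : Y i₀ = 0 := by rw [h]; rfl
    rw [hY] at this; simpa using this
  -- the base point
  have hp1 : (0:ℝ) < a ^ 2 := by positivity
  have hp2 : (0:ℝ) < a' ^ 2 := by positivity
  have hpV : ((a ^ 2, a' ^ 2) : ℝ × ℝ) ∈ V := hVsub (mem_quadrant_of_pos hp1 hp2)
  have hqY : qmap n₁ n₂ Y = (a ^ 2, a' ^ 2) := by
    have h1 : (∑ i, if (i : Fin (n₁+n₂)).val < n₁ then Y i ^ 2 else 0) = a ^ 2 := by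
      rw [Finset.sum_eq_single i₀]
      · rw [hY]; simp [hlt0]
      · intro b _ hb
        by_cases hbN : b = iN
        · subst hbN; simp [show ¬ ((b:ℕ) < n₁) by omega]
        · rw [hY]; simp [hb, hbN]
      · intro h; exact absurd (Finset.mem_univ i₀) h
    have h2 : (∑ i, if n₁ ≤ (i : Fin (n₁+n₂)).val then Y i ^ 2 else 0) = a' ^ 2 := by
      rw [Finset.sum_eq_single iN]
      · rw [hY]; simp [hgeN, hne.symm]
      · intro b _ hb
        by_cases hb0 : b = i₀
        · subst hb0; simp [show ¬ (n₁ ≤ (b:ℕ)) by omega]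
        · rw [hY]; simp [hb, hb0]
      · intro h; exact absurd (Finset.mem_univ iN) h
    rw [qmap, h1, h2]
  -- symmetry and Euler relations
  have hsym : D1 (D2 L) (a ^ 2, a' ^ 2) = l12 := by
    rw [hl12]; exact Dsymm hVopen hLsm hpV
  have heul := euler2 hVopen hVsub hLsm hLhom (a ^ 2, a' ^ 2) hp1 hp2
  have he1 : a ^ 2 * l11 + a' ^ 2 * l12 = 0 := by
    have := heul.1; rw [hsym, ← hl11] at this; exact this
  have he2 : a ^ 2 * l12 + a' ^ 2 * l22 = 0 := by
    have := heul.2; rw [← hl12, ← hl22] at this; exact this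
  have he3 : a ^ 2 * l1 + a' ^ 2 * l2 = l0 := by
    have := euler1 hVopen hVsub hLsm hLhom (a ^ 2, a' ^ 2) hp1 hp2
    rw [← hl1, ← hl2, ← hl0] at this; exact this
  -- explicit Hessian
  have hGval : ∀ i k : Fin (n₁ + n₂), hess (Fa n₁ n₂ L) Y i k =
      if i = i₀ then
        (if k = i₀ then l1 + 2 * a ^ 2 * l11 else if k = iN then 2 * a * a' * l12 else 0)
      else if i = iN then
        (if k = i₀ then 2 * a * a' * l12 else if k = iN then l2 + 2 * a' ^ 2 * l22 else 0)
      else if k = i then (if (i : ℕ) < n₁ then l1 else l2) else 0 := by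
    intro i k
    rw [hess_entry hVopen hVsub hLsm hLpos Y hY0 i k, hqY]
    have hiNlt : ¬ ((iN : ℕ) < n₁) := by omega
    by_cases hii0 : i = i₀
    · by_cases hkk0 : k = i₀
      · simp only [hY, hii0, hkk0, if_pos rfl, hlt0, if_true, hl1, hl11]
        ring
      · by_cases hkkN : k = iN
        · simp only [hY, hii0, hkkN, if_pos rfl, hlt0, if_true, hiNlt, if_false,
            if_neg hne.symm, if_neg hne, hsym.symm]
          ring
        · simp only [hY, hii0, hkk0, hkkN, if_pos rfl, if_false, if_neg (Ne.symm hkk0),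
            if_neg hkk0, if_neg hkkN, hlt0, if_true]
          ring
    · by_cases hiiN : i = iN
      · by_cases hkk0 : k = i₀
        · simp only [hY, hiiN, hkk0, if_pos rfl, if_neg hne, if_neg hne.symm, hiNlt,
            if_false, hlt0, if_true, hl12]
          ring
        · by_cases hkkN : k = iN
          · rw [hl2, hl22, hY]
            simp [hiiN, hkkN, hne.symm, hiNlt]
            left; ring
          · simp [hY, hiiN, hkk0, hkkN, hne.symm, hiNlt]
      · have hYi : Y i = 0 := by rw [hY]; simp [hii0, hiiN]
        rw [hYi]
        simp only [hii0, hiiN, if_false, mul_zero, zero_mul, add_zero]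
        by_cases hki : k = i
        · by_cases hilt : (i : ℕ) < n₁
          · simp only [hki, if_pos rfl, hilt, if_true, hl1]
          · simp only [hki, if_pos rfl, hilt, if_false, hl2]
        · simp only [if_neg hki]
  -- candidate inverse matrix
  have hΔne : l1 * l2 - 2 * l0 * l12 ≠ 0 := ne_of_gt hdet
  have hl1ne : l1 ≠ 0 := ne_of_gt hl1pos
  have hl2ne : l2 ≠ 0 := ne_of_gt hl2pos
  set N : Matrix (Fin (n₁+n₂)) (Fin (n₁+n₂)) ℝ := Matrix.of (fun i j =>
    if i = i₀ then
      (if j = i₀ then (l2 + 2 * a' ^ 2 * l22) / (l1 * l2 - 2 * l0 * l12)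
       else if j = iN then -(2 * a * a' * l12) / (l1 * l2 - 2 * l0 * l12) else 0)
    else if i = iN then
      (if j = i₀ then -(2 * a * a' * l12) / (l1 * l2 - 2 * l0 * l12)
       else if j = iN then (l1 + 2 * a ^ 2 * l11) / (l1 * l2 - 2 * l0 * l12) else 0)
    else if j = i then (if (i : ℕ) < n₁ then 1 / l1 else 1 / l2) else 0) with hN
  have hNval : ∀ i j : Fin (n₁+n₂), N i j =
      (if i = i₀ then
        (if j = i₀ then (l2 + 2 * a' ^ 2 * l22) / (l1 * l2 - 2 * l0 * l12)
         else if j = iN then -(2 * a * a' * l12) / (l1 * l2 - 2 * l0 * l12) else 0)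
      else if i = iN then
        (if j = i₀ then -(2 * a * a' * l12) / (l1 * l2 - 2 * l0 * l12)
         else if j = iN then (l1 + 2 * a ^ 2 * l11) / (l1 * l2 - 2 * l0 * l12) else 0)
      else if j = i then (if (i : ℕ) < n₁ then 1 / l1 else 1 / l2) else 0) :=
    fun i j => rfl
  have hkey : (l1 + 2 * a ^ 2 * l11) * (l2 + 2 * a' ^ 2 * l22)
      - (2 * a * a' * l12) * (2 * a * a' * l12) = l1 * l2 - 2 * l0 * l12 := by
    linear_combination (2 * l2 + 4 * a' ^ 2 * l22) * he1 + (2 * l1 - 4 * a' ^ 2 * l12) * he2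
      + (-2 * l12) * he3
  have hN00 : N i₀ i₀ = (l2 + 2 * a' ^ 2 * l22) / (l1 * l2 - 2 * l0 * l12) := by
    rw [hNval]; simp
  have hN0N : N i₀ iN = -(2 * a * a' * l12) / (l1 * l2 - 2 * l0 * l12) := by
    rw [hNval]; simp [hne, hne.symm]
  have hNN0 : N iN i₀ = -(2 * a * a' * l12) / (l1 * l2 - 2 * l0 * l12) := by
    rw [hNval]; simp [hne, hne.symm]
  have hNNN : N iN iN = (l1 + 2 * a ^ 2 * l11) / (l1 * l2 - 2 * l0 * l12) := by
    rw [hNval]; simp [hne, hne.symm]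
  have hN0j : ∀ j, j ≠ i₀ → j ≠ iN → N i₀ j = 0 := by
    intro j h1 h2; rw [hNval]; simp [h1, h2]
  have hNNj : ∀ j, j ≠ i₀ → j ≠ iN → N iN j = 0 := by
    intro j h1 h2; rw [hNval]; simp [h1, h2, hne.symm]
  have hNgd : ∀ i : Fin (n₁+n₂), i ≠ i₀ → i ≠ iN →
      N i i = (if (i : ℕ) < n₁ then 1 / l1 else 1 / l2) := by
    intro i h1 h2; rw [hNval]; simp [h1, h2]
  have hNgo : ∀ i j : Fin (n₁+n₂), i ≠ i₀ → i ≠ iN → j ≠ i → N i j = 0 := by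
    intro i j h1 h2 h3; rw [hNval]; simp [h1, h2, h3]
  have hMN : hess (Fa n₁ n₂ L) Y * N = 1 := by
    ext i j
    rw [Matrix.mul_apply]
    by_cases hii0 : i = i₀
    · have hstep : ∀ k, hess (Fa n₁ n₂ L) Y i k * N k j =
          (if k = i₀ then (l1 + 2 * a ^ 2 * l11) * N i₀ j else 0)
          + (if k = iN then (2 * a * a' * l12) * N iN j else 0) := by
        intro k
        rw [hGval i k]
        by_cases hk0 : k = i₀
        · simp [hii0, hk0, hne, hne.symm]
        · by_cases hkN : k = iN
          · simp [hii0, hk0, hkN, hne, hne.symm]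
          · simp [hii0, hk0, hkN]
      rw [Finset.sum_congr rfl (fun k _ => hstep k), Finset.sum_add_distrib,
        Finset.sum_ite_eq' Finset.univ i₀, Finset.sum_ite_eq' Finset.univ iN]
      simp only [Finset.mem_univ, if_true]
      by_cases hj0 : j = i₀
      · rw [hii0, hj0, hN00, hNN0, Matrix.one_apply_eq]
        have harr : (l1 + 2 * a ^ 2 * l11) * ((l2 + 2 * a' ^ 2 * l22) / (l1 * l2 - 2 * l0 * l12))
            + 2 * a * a' * l12 * (-(2 * a * a' * l12) / (l1 * l2 - 2 * l0 * l12))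
            = ((l1 + 2 * a ^ 2 * l11) * (l2 + 2 * a' ^ 2 * l22)
                - (2 * a * a' * l12) * (2 * a * a' * l12)) / (l1 * l2 - 2 * l0 * l12) := by
          ring
        rw [harr, hkey, div_self hΔne]
      · by_cases hjN : j = iN
        · rw [hii0, hjN, hN0N, hNNN, Matrix.one_apply_ne hne]
          ring
        · rw [hii0, hN0j j hj0 hjN, hNNj j hj0 hjN,
            Matrix.one_apply_ne (Ne.symm hj0)]
          ring
    · by_cases hiiN : i = iN
      · have hstep : ∀ k, hess (Fa n₁ n₂ L) Y i k * N k j =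
            (if k = i₀ then (2 * a * a' * l12) * N i₀ j else 0)
            + (if k = iN then (l2 + 2 * a' ^ 2 * l22) * N iN j else 0) := by
          intro k
          rw [hGval i k]
          by_cases hk0 : k = i₀
          · simp [hiiN, hk0, hne, hne.symm]
          · by_cases hkN : k = iN
            · simp [hiiN, hk0, hkN, hne, hne.symm]
            · simp [hiiN, hk0, hkN, hne.symm]
        rw [Finset.sum_congr rfl (fun k _ => hstep k), Finset.sum_add_distrib,
          Finset.sum_ite_eq' Finset.univ i₀, Finset.sum_ite_eq' Finset.univ iN]
        simp only [Finset.mem_univ, if_true]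
        by_cases hj0 : j = i₀
        · rw [hiiN, hj0, hN00, hNN0, Matrix.one_apply_ne (Ne.symm hne)]
          ring
        · by_cases hjN : j = iN
          · rw [hiiN, hjN, hN0N, hNNN, Matrix.one_apply_eq]
            have harr : 2 * a * a' * l12 * (-(2 * a * a' * l12) / (l1 * l2 - 2 * l0 * l12))
                + (l2 + 2 * a' ^ 2 * l22) * ((l1 + 2 * a ^ 2 * l11) / (l1 * l2 - 2 * l0 * l12))
                = ((l1 + 2 * a ^ 2 * l11) * (l2 + 2 * a' ^ 2 * l22)
                    - (2 * a * a' * l12) * (2 * a * a' * l12)) / (l1 * l2 - 2 * l0 * l12) := by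
              ring
            rw [harr, hkey, div_self hΔne]
          · rw [hiiN, hN0j j hj0 hjN, hNNj j hj0 hjN,
              Matrix.one_apply_ne (Ne.symm hjN)]
            ring
      · have hstep : ∀ k, hess (Fa n₁ n₂ L) Y i k * N k j =
            (if k = i then (if (i : ℕ) < n₁ then l1 else l2) * N i j else 0) := by
          intro k
          rw [hGval i k]
          by_cases hki : k = i
          · simp [hii0, hiiN, hki]
          · simp [hii0, hiiN, hki]
        rw [Finset.sum_congr rfl (fun k _ => hstep k),
          Finset.sum_ite_eq' Finset.univ i]
        simp only [Finset.mem_univ, if_true]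
        by_cases hji : j = i
        · rw [hji, hNgd i hii0 hiiN, Matrix.one_apply_eq]
          by_cases hilt : (i : ℕ) < n₁
          · simp only [hilt, if_true]; field_simp
          · simp only [hilt, if_false]; field_simp
        · rw [hNgo i j hii0 hiiN hji, Matrix.one_apply_ne (Ne.symm hji), mul_zero]
  refine ⟨Matrix.isUnit_det_of_right_inverse hMN, ?_⟩
  have hGN : Ginv = N := by rw [hGinv]; exact Matrix.inv_eq_right_inv hMN
  rw [hGN]
  refine ⟨?_, ?_, ?_, ?_, ?_, ?_, ?_⟩
  · rw [hNval]; simp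
  · rw [hNval]; simp [hne, hne.symm]
  · rw [hNval]; simp [hne, hne.symm]
  · rw [hNval]; simp [hne, hne.symm]
  · intro i h1 h2
    have hi0 : i ≠ i₀ := fun h => by rw [h, hi₀] at h1; omega
    have hiN : i ≠ iN := fun h => by rw [h, hiN] at h2; omega
    rw [hNval]; simp [hi0, hiN, h2]
  · intro i h1 h2
    have hi0 : i ≠ i₀ := fun h => by rw [h, hi₀] at h1; omega
    have hiN : i ≠ iN := fun h => by rw [h, hiN] at h2; omega
    rw [hNval]; simp [hi0, hiN, show ¬ ((i:ℕ) < n₁) by omega]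
  · intro i j hij hspec
    rw [hNval]
    by_cases hi0 : i = i₀
    · have hj0 : j ≠ i₀ := fun h => hij (by rw [hi0, h])
      have hjN : j ≠ iN := fun h => hspec (Or.inl ⟨hi0, h⟩)
      simp [hi0, hj0, hjN]
    · by_cases hiN' : i = iN
      · have hj0 : j ≠ i₀ := fun h => hspec (Or.inr ⟨hiN', h⟩)
        have hjN : j ≠ iN := fun h => hij (by rw [hiN', h])
        simp [hi0, hiN', hj0, hjN]
      · have hji : j ≠ i := fun h => hij h.symm
        simp [hi0, hiN', hji]
end
end

section
/- Define G_l(y) = (1/4)( Σ_k ∂²F²/∂x^k∂y^l(0,y)·y^k − ∂F²/∂x^l(0,y) ). Then at the point 𝐲 = (a,0,…,0,a'): G₁(𝐲) = aa'L₁₂·A₁ + (1/2)a'²(L₂ − L₁ + 2L₁₂)·A₂, and G_n(𝐲) = (1/2)a²(L₂ − L₁ − 2L₁₂)·A₁ − aa'L₁₂·A₂. -/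
noncomputable section

open Matrix MeasureTheory

/-- The `(α₁,α₂)`-metric `F(x,y) = √(L(a_{ij}(x)yⁱyʲ, b_{ij}(x)yⁱyʲ))`. -/
def FF (n : ℕ) (L : ℝ × ℝ → ℝ) (am bm : (Fin n → ℝ) → Matrix (Fin n) (Fin n) ℝ)
    (x y : Fin n → ℝ) : ℝ :=
  Real.sqrt (L (∑ i, ∑ j, am x i j * y i * y j, ∑ i, ∑ j, bm x i j * y i * y j))




lemma sum_pair_support {n : ℕ} {i₀ iN : Fin n} (h : i₀ ≠ iN) (f : Fin n → ℝ)
    (hf : ∀ i, i ≠ i₀ → i ≠ iN → f i = 0) : ∑ i, f i = f i₀ + f iN := by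
  rw [← Finset.sum_pair h]
  refine (Finset.sum_subset (Finset.subset_univ _) ?_).symm
  intro i _ hi
  simp only [Finset.mem_insert, Finset.mem_singleton, not_or] at hi
  exact hf i hi.1 hi.2

lemma clm_R2' {E : Type*} [NormedAddCommGroup E] [NormedSpace ℝ E]
    (f : ℝ × ℝ →L[ℝ] E) (p : ℝ × ℝ) : f p = p.1 • f (1, 0) + p.2 • f (0, 1) := by
  have hp : p = p.1 • ((1:ℝ), (0:ℝ)) + p.2 • ((0:ℝ), (1:ℝ)) := by
    ext <;> simp
  conv_lhs => rw [hp]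
  rw [map_add, _root_.map_smul, _root_.map_smul]

lemma clm_R2 (f : ℝ × ℝ →L[ℝ] ℝ) (p : ℝ × ℝ) : f p = p.1 * f (1, 0) + p.2 * f (0, 1) := by
  simpa [smul_eq_mul] using clm_R2' f p

def quadD (n : ℕ) (c : Matrix (Fin n) (Fin n) ℝ) (Y : Fin n → ℝ) : (Fin n → ℝ) →L[ℝ] ℝ :=
  ∑ i, ∑ j, c i j • (Y i • (ContinuousLinearMap.proj j : (Fin n → ℝ) →L[ℝ] ℝ)
    + Y j • (ContinuousLinearMap.proj i : (Fin n → ℝ) →L[ℝ] ℝ))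

lemma quad_hasFDerivAt (n : ℕ) (c : Matrix (Fin n) (Fin n) ℝ) (Y : Fin n → ℝ) :
    HasFDerivAt (fun y : Fin n → ℝ => ∑ i, ∑ j, c i j * y i * y j) (quadD n c Y) Y := by
  unfold quadD
  apply HasFDerivAt.fun_sum
  intro i _
  apply HasFDerivAt.fun_sum
  intro j _
  have h1 : HasFDerivAt (fun y : Fin n → ℝ => y i)
      (ContinuousLinearMap.proj i : (Fin n → ℝ) →L[ℝ] ℝ) Y :=
    (ContinuousLinearMap.proj i : (Fin n → ℝ) →L[ℝ] ℝ).hasFDerivAt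
  have h2 : HasFDerivAt (fun y : Fin n → ℝ => y j)
      (ContinuousLinearMap.proj j : (Fin n → ℝ) →L[ℝ] ℝ) Y :=
    (ContinuousLinearMap.proj j : (Fin n → ℝ) →L[ℝ] ℝ).hasFDerivAt
  have h3 := (h1.mul h2).const_mul (c i j)
  simpa [mul_assoc] using h3

lemma quadD_apply (n : ℕ) (c : Matrix (Fin n) (Fin n) ℝ) (Y v : Fin n → ℝ) :
    quadD n c Y v = ∑ i, ∑ j, c i j * (Y i * v j + Y j * v i) := by
  simp [quadD, ContinuousLinearMap.sum_apply, smul_eq_mul, mul_add]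

lemma hasFDerivAt_matsum {n : ℕ} (cm : (Fin n → ℝ) → Matrix (Fin n) (Fin n) ℝ)
    (h : ∀ i j, DifferentiableAt ℝ (fun x => cm x i j) (0 : Fin n → ℝ))
    (w : Fin n → Fin n → ℝ) :
    HasFDerivAt (fun x => ∑ i, ∑ j, cm x i j * w i j)
      (∑ i, ∑ j, w i j • fderiv ℝ (fun x => cm x i j) 0) (0 : Fin n → ℝ) := by
  apply HasFDerivAt.fun_sum
  intro i _
  apply HasFDerivAt.fun_sum
  intro j _
  exact ((h i j).hasFDerivAt).mul_const (w i j)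



open Topology Filter

set_option maxHeartbeats 2000000
/-- the covector `G_l(𝐲) = ¼( ∂²F²/∂xᵏ∂yˡ(0,𝐲)·𝐲ᵏ − ∂F²/∂xˡ(0,𝐲) )`
at `𝐲 = (a,0,…,0,a')`. -/
theorem Gl_at_special_point (n₁ n₂ : ℕ) (hn₁ : 1 ≤ n₁) (hn₂ : 1 ≤ n₂)
    (L : ℝ × ℝ → ℝ) (V : Set (ℝ × ℝ)) (hVopen : IsOpen V) (hVsub : quadrant ⊆ V)
    (hLsm : ContDiffOn ℝ (⊤ : ℕ∞) L V) (hLpos : ∀ p ∈ V, 0 < L p)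
    (hLhom : ∀ lam : ℝ, 0 < lam → ∀ p ∈ quadrant, L (lam * p.1, lam * p.2) = lam * L p)
    (am bm : (Fin (n₁ + n₂) → ℝ) → Matrix (Fin (n₁ + n₂)) (Fin (n₁ + n₂)) ℝ)
    (U : Set (Fin (n₁ + n₂) → ℝ)) (hUopen : IsOpen U) (hU0 : (0 : Fin (n₁ + n₂) → ℝ) ∈ U)
    (hasym : ∀ x, (am x).IsSymm) (hbsym : ∀ x, (bm x).IsSymm)
    (hasm : ∀ i j, ContDiffOn ℝ (⊤ : ℕ∞) (fun x => am x i j) U)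
    (hbsm : ∀ i j, ContDiffOn ℝ (⊤ : ℕ∞) (fun x => bm x i j) U)
    (ha0 : ∀ i j : Fin (n₁ + n₂), am 0 i j = if i = j ∧ (i : ℕ) < n₁ then 1 else 0)
    (hb0 : ∀ i j : Fin (n₁ + n₂), bm 0 i j = if i = j ∧ n₁ ≤ (i : ℕ) then 1 else 0)
    (habd : ∀ i j k, pd (fun x => am x i j + bm x i j) k 0 = 0)
    (hMink : ∀ x ∈ U, IsMinkowskiNorm (FF (n₁ + n₂) L am bm x))
    (hbd : ∀ i j k : Fin (n₁ + n₂),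
      (((i : ℕ) < n₁ ∧ (j : ℕ) < n₁) ∨ (n₁ ≤ (i : ℕ) ∧ n₁ ≤ (j : ℕ))) →
      pd (fun x => bm x i j) k 0 = 0)
    (i₀ iN : Fin (n₁ + n₂)) (hi₀ : (i₀ : ℕ) = 0) (hiN : (iN : ℕ) = n₁ + n₂ - 1)
    (A₁ A₂ : ℝ) (hA₁ : A₁ = pd (fun x => bm x i₀ iN) i₀ 0)
    (hA₂ : A₂ = pd (fun x => bm x i₀ iN) iN 0)
    (a a' : ℝ) (ha : a ≠ 0) (ha' : a' ≠ 0) (hnorm : a ^ 2 + a' ^ 2 = 1)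
    (Y : Fin (n₁ + n₂) → ℝ)
    (hY : Y = fun i => if i = i₀ then a else if i = iN then a' else 0)
    (l1 l2 l12 : ℝ)
    (hl1 : l1 = D1 L (a ^ 2, a' ^ 2)) (hl2 : l2 = D2 L (a ^ 2, a' ^ 2))
    (hl12 : l12 = D2 (D1 L) (a ^ 2, a' ^ 2))
    (Gl : Fin (n₁ + n₂) → ℝ)
    (hGl : ∀ l, Gl l = (1 / 4 : ℝ) *
      ((∑ k, pd (fun x => pd (fun w => (FF (n₁ + n₂) L am bm x w) ^ 2) l Y) k 0 * Y k)
        - pd (fun x => (FF (n₁ + n₂) L am bm x Y) ^ 2) l 0)) :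
    Gl i₀ = a * a' * l12 * A₁ + (1 / 2) * a' ^ 2 * (l2 - l1 + 2 * l12) * A₂ ∧
    Gl iN = (1 / 2) * a ^ 2 * (l2 - l1 - 2 * l12) * A₁ - a * a' * l12 * A₂ := by
    classical
  have hne : i₀ ≠ iN := by
    intro h
    rw [h, hiN] at hi₀
    omega
  have hi₀n₁ : (i₀ : ℕ) < n₁ := by omega
  have hiNn₁ : n₁ ≤ (iN : ℕ) := by
    have := iN.isLt
    omega
  have hiNlt : ¬ ((iN : ℕ) < n₁) := by omega
  have hi₀ge : ¬ (n₁ ≤ (i₀ : ℕ)) := by omega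
  have hYi₀ : Y i₀ = a := by simp [hY]
  have hYiN : Y iN = a' := by simp [hY, Ne.symm hne]
  have hY0 : ∀ i, i ≠ i₀ → i ≠ iN → Y i = 0 := by
    intro i h1 h2
    simp [hY, h1, h2]
  have sumY : ∀ g : Fin (n₁ + n₂) → ℝ, ∑ i, Y i * g i = a * g i₀ + a' * g iN := by
    intro g
    rw [sum_pair_support hne (fun i => Y i * g i)
      (fun i h1 h2 => by show Y i * g i = 0; rw [hY0 i h1 h2, zero_mul]), hYi₀, hYiN]
  have sumE : ∀ (l : Fin (n₁ + n₂)) (g : Fin (n₁ + n₂) → ℝ),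
      ∑ j, eb (n₁ + n₂) l j * g j = g l := by
    intro l g
    simp only [eb, Pi.single_apply, ite_mul, one_mul, zero_mul]
    simp [Finset.sum_ite_eq']
  have collapse2 : ∀ f : Fin (n₁ + n₂) → Fin (n₁ + n₂) → ℝ,
      ∑ i, ∑ j, Y i * Y j * f i j
        = a * a * f i₀ i₀ + a * a' * f i₀ iN + a' * a * f iN i₀ + a' * a' * f iN iN := by
    intro f
    have h1 : ∑ i, ∑ j, Y i * Y j * f i j = ∑ i, Y i * ∑ j, Y j * f i j := by
      refine Finset.sum_congr rfl fun i _ => ?_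
      rw [Finset.mul_sum]
      exact Finset.sum_congr rfl fun j _ => by ring
    rw [h1, sumY (fun i => ∑ j, Y j * f i j), sumY (fun j => f i₀ j), sumY (fun j => f iN j)]
    ring
  have collapseE : ∀ (l : Fin (n₁ + n₂)) (f : Fin (n₁ + n₂) → Fin (n₁ + n₂) → ℝ),
      ∑ i, ∑ j, (Y i * eb (n₁ + n₂) l j + Y j * eb (n₁ + n₂) l i) * f i j
        = a * f i₀ l + a' * f iN l + (a * f l i₀ + a' * f l iN) := by
    intro l f
    have h1 : ∀ i, ∑ j, (Y i * eb (n₁ + n₂) l j + Y j * eb (n₁ + n₂) l i) * f i j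
        = Y i * f i l + eb (n₁ + n₂) l i * ∑ j, Y j * f i j := by
      intro i
      calc ∑ j, (Y i * eb (n₁ + n₂) l j + Y j * eb (n₁ + n₂) l i) * f i j
          = ∑ j, (Y i * (eb (n₁ + n₂) l j * f i j) + eb (n₁ + n₂) l i * (Y j * f i j)) :=
            Finset.sum_congr rfl fun j _ => by ring
        _ = (∑ j, Y i * (eb (n₁ + n₂) l j * f i j)) + ∑ j, eb (n₁ + n₂) l i * (Y j * f i j) :=
            Finset.sum_add_distrib
        _ = Y i * (∑ j, eb (n₁ + n₂) l j * f i j) + eb (n₁ + n₂) l i * ∑ j, Y j * f i j := by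
            rw [← Finset.mul_sum, ← Finset.mul_sum]
        _ = Y i * f i l + eb (n₁ + n₂) l i * ∑ j, Y j * f i j := by
            rw [sumE l (fun j => f i j)]
    calc ∑ i, ∑ j, (Y i * eb (n₁ + n₂) l j + Y j * eb (n₁ + n₂) l i) * f i j
        = ∑ i, (Y i * f i l + eb (n₁ + n₂) l i * ∑ j, Y j * f i j) :=
          Finset.sum_congr rfl fun i _ => h1 i
      _ = (∑ i, Y i * f i l) + ∑ i, eb (n₁ + n₂) l i * ∑ j, Y j * f i j :=
          Finset.sum_add_distrib
      _ = (a * f i₀ l + a' * f iN l) + ∑ j, Y j * f l j := by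
          rw [sumY (fun i => f i l), sumE l (fun i => ∑ j, Y j * f i j)]
      _ = a * f i₀ l + a' * f iN l + (a * f l i₀ + a' * f l iN) := by
          rw [sumY (fun j => f l j)]
  -- differentiability of the matrix entries
  have hUnhds : U ∈ 𝓝 (0 : Fin (n₁ + n₂) → ℝ) := hUopen.mem_nhds hU0
  have hamd : ∀ i j, DifferentiableAt ℝ (fun x => am x i j) 0 :=
    fun i j => ((hasm i j).contDiffAt hUnhds).differentiableAt (by simp)
  have hbmd : ∀ i j, DifferentiableAt ℝ (fun x => bm x i j) 0 :=
    fun i j => ((hbsm i j).contDiffAt hUnhds).differentiableAt (by simp)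
  have hab : ∀ i j k, fderiv ℝ (fun x => am x i j) 0 (eb (n₁ + n₂) k)
      = - fderiv ℝ (fun x => bm x i j) 0 (eb (n₁ + n₂) k) := by
    intro i j k
    have h2 : fderiv ℝ (fun x => am x i j + bm x i j) 0 (eb (n₁ + n₂) k) = 0 := habd i j k
    rw [fderiv_fun_add (hamd i j) (hbmd i j), ContinuousLinearMap.add_apply] at h2
    linarith
  have hbswap : ∀ k, fderiv ℝ (fun x => bm x iN i₀) 0 (eb (n₁ + n₂) k)
      = fderiv ℝ (fun x => bm x i₀ iN) 0 (eb (n₁ + n₂) k) := by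
    intro k
    rw [show (fun x => bm x iN i₀) = (fun x => bm x i₀ iN) from
      funext fun x => (hbsym x).apply i₀ iN]
  have hbd00 : ∀ k, fderiv ℝ (fun x => bm x i₀ i₀) 0 (eb (n₁ + n₂) k) = 0 :=
    fun k => hbd i₀ i₀ k (Or.inl ⟨hi₀n₁, hi₀n₁⟩)
  have hbdNN : ∀ k, fderiv ℝ (fun x => bm x iN iN) 0 (eb (n₁ + n₂) k) = 0 :=
    fun k => hbd iN iN k (Or.inr ⟨hiNn₁, hiNn₁⟩)
  set Q0 : ℝ × ℝ := (a ^ 2, a' ^ 2) with hQ0def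
  have ha2 : (0:ℝ) < a ^ 2 := by positivity
  have ha'2 : (0:ℝ) < a' ^ 2 := by positivity
  have hQ0quad : Q0 ∈ quadrant := by
    refine ⟨le_of_lt ha2, le_of_lt ha'2, ?_⟩
    intro h
    rw [hQ0def, Prod.ext_iff] at h
    exact pow_ne_zero 2 ha h.1
  have hQ0V : Q0 ∈ V := hVsub hQ0quad
  -- values of the matrices at 0
  have e1 : am 0 i₀ i₀ = 1 := by rw [ha0]; simp [hi₀n₁]
  have e2 : am 0 i₀ iN = 0 := by rw [ha0]; simp [hne]
  have e3 : am 0 iN i₀ = 0 := by rw [ha0]; simp [Ne.symm hne]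
  have e4 : am 0 iN iN = 0 := by rw [ha0]; simp [hiNlt]
  have f1 : bm 0 i₀ i₀ = 0 := by rw [hb0]; simp [hi₀ge]
  have f2 : bm 0 i₀ iN = 0 := by rw [hb0]; simp [hne]
  have f3 : bm 0 iN i₀ = 0 := by rw [hb0]; simp [Ne.symm hne]
  have f4 : bm 0 iN iN = 1 := by rw [hb0]; simp [hiNn₁]
  have hqA0 : ∑ i, ∑ j, am 0 i j * Y i * Y j = a ^ 2 := by
    have h1 : ∑ i, ∑ j, am 0 i j * Y i * Y j = ∑ i, ∑ j, Y i * Y j * am 0 i j :=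
      Finset.sum_congr rfl fun i _ => Finset.sum_congr rfl fun j _ => by ring
    rw [h1, collapse2 (fun i j => am 0 i j), e1, e2, e3, e4]
    ring
  have hqB0 : ∑ i, ∑ j, bm 0 i j * Y i * Y j = a' ^ 2 := by
    have h1 : ∑ i, ∑ j, bm 0 i j * Y i * Y j = ∑ i, ∑ j, Y i * Y j * bm 0 i j :=
      Finset.sum_congr rfl fun i _ => Finset.sum_congr rfl fun j _ => by ring
    rw [h1, collapse2 (fun i j => bm 0 i j), f1, f2, f3, f4]
    ring
  -- rectangle on which F² = L ∘ (quadratic forms)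
  have hcont : ContinuousAt (fun z : (Fin (n₁ + n₂) → ℝ) × (Fin (n₁ + n₂) → ℝ) =>
      ((∑ i, ∑ j, am z.1 i j * z.2 i * z.2 j, ∑ i, ∑ j, bm z.1 i j * z.2 i * z.2 j) : ℝ × ℝ))
      ((0 : Fin (n₁ + n₂) → ℝ), Y) := by
    have cterm : ∀ (cm : (Fin (n₁ + n₂) → ℝ) → Matrix (Fin (n₁ + n₂)) (Fin (n₁ + n₂)) ℝ),
        (∀ i j, DifferentiableAt ℝ (fun x => cm x i j) 0) → ∀ i j : Fin (n₁ + n₂),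
        ContinuousAt (fun z : (Fin (n₁ + n₂) → ℝ) × (Fin (n₁ + n₂) → ℝ) =>
          cm z.1 i j * z.2 i * z.2 j) ((0 : Fin (n₁ + n₂) → ℝ), Y) := by
      intro cm hd i j
      have c1 : ContinuousAt (fun z : (Fin (n₁ + n₂) → ℝ) × (Fin (n₁ + n₂) → ℝ) => cm z.1 i j)
          ((0 : Fin (n₁ + n₂) → ℝ), Y) :=
        ContinuousAt.comp (g := fun x => cm x i j) (f := Prod.fst) ((hd i j).continuousAt)
          continuousAt_fst
      have c2 : ContinuousAt (fun z : (Fin (n₁ + n₂) → ℝ) × (Fin (n₁ + n₂) → ℝ) => z.2 i)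
          ((0 : Fin (n₁ + n₂) → ℝ), Y) :=
        ContinuousAt.comp (g := fun v : Fin (n₁ + n₂) → ℝ => v i) (f := Prod.snd)
          ((continuous_apply i).continuousAt) continuousAt_snd
      have c3 : ContinuousAt (fun z : (Fin (n₁ + n₂) → ℝ) × (Fin (n₁ + n₂) → ℝ) => z.2 j)
          ((0 : Fin (n₁ + n₂) → ℝ), Y) :=
        ContinuousAt.comp (g := fun v : Fin (n₁ + n₂) → ℝ => v j) (f := Prod.snd)
          ((continuous_apply j).continuousAt) continuousAt_snd
      exact (c1.mul c2).mul c3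
    exact ContinuousAt.prodMk
      (tendsto_finset_sum _ fun i _ => tendsto_finset_sum _ fun j _ => cterm am hamd i j)
      (tendsto_finset_sum _ fun i _ => tendsto_finset_sum _ fun j _ => cterm bm hbmd i j)
  have hVnhds : V ∈ 𝓝 ((∑ i, ∑ j, am 0 i j * Y i * Y j,
      ∑ i, ∑ j, bm 0 i j * Y i * Y j) : ℝ × ℝ) := by
    rw [hqA0, hqB0]
    exact hVopen.mem_nhds hQ0V
  have hmem := hcont.preimage_mem_nhds hVnhds
  rcases mem_nhds_prod_iff.mp hmem with ⟨Wx, hWx, Wy, hWy, hWsub⟩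
  have hkey : ∀ x ∈ Wx, ∀ y ∈ Wy,
      ((∑ i, ∑ j, am x i j * y i * y j, ∑ i, ∑ j, bm x i j * y i * y j) : ℝ × ℝ) ∈ V := by
    intro x hx y hy
    have h := hWsub (Set.mk_mem_prod hx hy)
    simpa using h
  have hsq : ∀ x ∈ Wx, ∀ y ∈ Wy, FF (n₁ + n₂) L am bm x y ^ 2
      = L (∑ i, ∑ j, am x i j * y i * y j, ∑ i, ∑ j, bm x i j * y i * y j) := by
    intro x hx y hy
    exact Real.sq_sqrt (le_of_lt (hLpos _ (hkey x hx y hy)))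
  have hYWy : Y ∈ Wy := mem_of_mem_nhds hWy
  have h0Wx : (0 : Fin (n₁ + n₂) → ℝ) ∈ Wx := mem_of_mem_nhds hWx
  -- Step I: the y-derivative for x near 0
  have stepI : ∀ x ∈ Wx, ∀ l : Fin (n₁ + n₂),
      pd (fun w => FF (n₁ + n₂) L am bm x w ^ 2) l Y
        = D1 L (∑ i, ∑ j, am x i j * Y i * Y j, ∑ i, ∑ j, bm x i j * Y i * Y j)
            * (∑ i, ∑ j, am x i j * (Y i * eb (n₁ + n₂) l j + Y j * eb (n₁ + n₂) l i))
          + D2 L (∑ i, ∑ j, am x i j * Y i * Y j, ∑ i, ∑ j, bm x i j * Y i * Y j)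
            * (∑ i, ∑ j, bm x i j * (Y i * eb (n₁ + n₂) l j + Y j * eb (n₁ + n₂) l i)) := by
    intro x hx l
    have hfeq : (fun w => FF (n₁ + n₂) L am bm x w ^ 2)
        =ᶠ[𝓝 Y] (fun w => L (∑ i, ∑ j, am x i j * w i * w j,
          ∑ i, ∑ j, bm x i j * w i * w j)) := by
      filter_upwards [hWy] with w hw using hsq x hx w hw
    have hQxV : ((∑ i, ∑ j, am x i j * Y i * Y j, ∑ i, ∑ j, bm x i j * Y i * Y j) : ℝ × ℝ) ∈ V :=
      hkey x hx Y hYWy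
    have hLd : HasFDerivAt L
        (fderiv ℝ L ((∑ i, ∑ j, am x i j * Y i * Y j, ∑ i, ∑ j, bm x i j * Y i * Y j) : ℝ × ℝ))
        ((∑ i, ∑ j, am x i j * Y i * Y j, ∑ i, ∑ j, bm x i j * Y i * Y j) : ℝ × ℝ) :=
      ((hLsm.contDiffAt (hVopen.mem_nhds hQxV)).differentiableAt (by simp)).hasFDerivAt
    have hqd : HasFDerivAt
        (fun w : Fin (n₁ + n₂) → ℝ =>
          ((∑ i, ∑ j, am x i j * w i * w j, ∑ i, ∑ j, bm x i j * w i * w j) : ℝ × ℝ))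
        ((quadD (n₁ + n₂) (am x) Y).prod (quadD (n₁ + n₂) (bm x) Y)) Y :=
      (quad_hasFDerivAt _ _ _).prodMk (quad_hasFDerivAt _ _ _)
    have hcomp : HasFDerivAt
        (fun w => L (∑ i, ∑ j, am x i j * w i * w j, ∑ i, ∑ j, bm x i j * w i * w j))
        ((fderiv ℝ L ((∑ i, ∑ j, am x i j * Y i * Y j,
            ∑ i, ∑ j, bm x i j * Y i * Y j) : ℝ × ℝ)).comp
          ((quadD (n₁ + n₂) (am x) Y).prod (quadD (n₁ + n₂) (bm x) Y))) Y :=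
      hLd.comp Y hqd
    have hfder : fderiv ℝ (fun w => L (∑ i, ∑ j, am x i j * w i * w j,
        ∑ i, ∑ j, bm x i j * w i * w j)) Y
        = (fderiv ℝ L ((∑ i, ∑ j, am x i j * Y i * Y j,
            ∑ i, ∑ j, bm x i j * Y i * Y j) : ℝ × ℝ)).comp
          ((quadD (n₁ + n₂) (am x) Y).prod (quadD (n₁ + n₂) (bm x) Y)) := hcomp.fderiv
    rw [pd, hfeq.fderiv_eq, hfder, ContinuousLinearMap.comp_apply,
      ContinuousLinearMap.prod_apply, clm_R2, quadD_apply, quadD_apply]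
    dsimp only
    simp only [D1, D2]
    ring
  -- derivatives in x of the two quadratic forms at the fixed vector Y
  set DQa : (Fin (n₁ + n₂) → ℝ) →L[ℝ] ℝ :=
    ∑ i, ∑ j, (Y i * Y j) • fderiv ℝ (fun x => am x i j) 0 with hDQadef
  set DQb : (Fin (n₁ + n₂) → ℝ) →L[ℝ] ℝ :=
    ∑ i, ∑ j, (Y i * Y j) • fderiv ℝ (fun x => bm x i j) 0 with hDQbdef
  have hQa : HasFDerivAt (fun x => ∑ i, ∑ j, am x i j * Y i * Y j) DQa 0 := by
    have h := hasFDerivAt_matsum am hamd (fun i j => Y i * Y j)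
    have heq : (fun x : Fin (n₁ + n₂) → ℝ => ∑ i, ∑ j, am x i j * (Y i * Y j))
        = fun x => ∑ i, ∑ j, am x i j * Y i * Y j := by
      funext x
      exact Finset.sum_congr rfl fun i _ =>
        Finset.sum_congr rfl fun j _ => (mul_assoc _ _ _).symm
    rw [hDQadef, ← heq]
    exact h
  have hQb : HasFDerivAt (fun x => ∑ i, ∑ j, bm x i j * Y i * Y j) DQb 0 := by
    have h := hasFDerivAt_matsum bm hbmd (fun i j => Y i * Y j)
    have heq : (fun x : Fin (n₁ + n₂) → ℝ => ∑ i, ∑ j, bm x i j * (Y i * Y j))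
        = fun x => ∑ i, ∑ j, bm x i j * Y i * Y j := by
      funext x
      exact Finset.sum_congr rfl fun i _ =>
        Finset.sum_congr rfl fun j _ => (mul_assoc _ _ _).symm
    rw [hDQbdef, ← heq]
    exact h
  have hDQbval : ∀ k, DQb (eb (n₁ + n₂) k)
      = 2 * (a * a') * fderiv ℝ (fun x => bm x i₀ iN) 0 (eb (n₁ + n₂) k) := by
    intro k
    rw [hDQbdef]
    simp only [ContinuousLinearMap.sum_apply, ContinuousLinearMap.smul_apply, smul_eq_mul]
    rw [collapse2 (fun i j => fderiv ℝ (fun x => bm x i j) 0 (eb (n₁ + n₂) k))]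
    rw [hbd00 k, hbdNN k, hbswap k]
    ring
  have hDQaval : ∀ k, DQa (eb (n₁ + n₂) k)
      = -(2 * (a * a') * fderiv ℝ (fun x => bm x i₀ iN) 0 (eb (n₁ + n₂) k)) := by
    intro k
    rw [hDQadef]
    simp only [ContinuousLinearMap.sum_apply, ContinuousLinearMap.smul_apply, smul_eq_mul]
    rw [collapse2 (fun i j => fderiv ℝ (fun x => am x i j) 0 (eb (n₁ + n₂) k))]
    rw [hab i₀ i₀ k, hab i₀ iN k, hab iN i₀ k, hab iN iN k, hbd00 k, hbdNN k, hbswap k]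
    ring
  -- derivatives in x of the mixed sums
  have hPAfd : ∀ l : Fin (n₁ + n₂), HasFDerivAt
      (fun x => ∑ i, ∑ j, am x i j * (Y i * eb (n₁ + n₂) l j + Y j * eb (n₁ + n₂) l i))
      (∑ i, ∑ j, (Y i * eb (n₁ + n₂) l j + Y j * eb (n₁ + n₂) l i) •
        fderiv ℝ (fun x => am x i j) 0) 0 :=
    fun l => hasFDerivAt_matsum am hamd _
  have hPBfd : ∀ l : Fin (n₁ + n₂), HasFDerivAt
      (fun x => ∑ i, ∑ j, bm x i j * (Y i * eb (n₁ + n₂) l j + Y j * eb (n₁ + n₂) l i))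
      (∑ i, ∑ j, (Y i * eb (n₁ + n₂) l j + Y j * eb (n₁ + n₂) l i) •
        fderiv ℝ (fun x => bm x i j) 0) 0 :=
    fun l => hasFDerivAt_matsum bm hbmd _
  have hPAval : ∀ (l k : Fin (n₁ + n₂)),
      (∑ i, ∑ j, (Y i * eb (n₁ + n₂) l j + Y j * eb (n₁ + n₂) l i) •
        fderiv ℝ (fun x => am x i j) 0) (eb (n₁ + n₂) k)
        = -(a * fderiv ℝ (fun x => bm x i₀ l) 0 (eb (n₁ + n₂) k)
            + a' * fderiv ℝ (fun x => bm x iN l) 0 (eb (n₁ + n₂) k)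
            + (a * fderiv ℝ (fun x => bm x l i₀) 0 (eb (n₁ + n₂) k)
            + a' * fderiv ℝ (fun x => bm x l iN) 0 (eb (n₁ + n₂) k))) := by
    intro l k
    simp only [ContinuousLinearMap.sum_apply, ContinuousLinearMap.smul_apply, smul_eq_mul]
    rw [collapseE l (fun i j => fderiv ℝ (fun x => am x i j) 0 (eb (n₁ + n₂) k))]
    rw [hab i₀ l k, hab iN l k, hab l i₀ k, hab l iN k]
    ring
  have hPBval : ∀ (l k : Fin (n₁ + n₂)),
      (∑ i, ∑ j, (Y i * eb (n₁ + n₂) l j + Y j * eb (n₁ + n₂) l i) •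
        fderiv ℝ (fun x => bm x i j) 0) (eb (n₁ + n₂) k)
        = a * fderiv ℝ (fun x => bm x i₀ l) 0 (eb (n₁ + n₂) k)
            + a' * fderiv ℝ (fun x => bm x iN l) 0 (eb (n₁ + n₂) k)
            + (a * fderiv ℝ (fun x => bm x l i₀) 0 (eb (n₁ + n₂) k)
            + a' * fderiv ℝ (fun x => bm x l iN) 0 (eb (n₁ + n₂) k)) := by
    intro l k
    simp only [ContinuousLinearMap.sum_apply, ContinuousLinearMap.smul_apply, smul_eq_mul]
    rw [collapseE l (fun i j => fderiv ℝ (fun x => bm x i j) 0 (eb (n₁ + n₂) k))]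
  have hPAi₀ : ∀ k, (∑ i, ∑ j, (Y i * eb (n₁ + n₂) i₀ j + Y j * eb (n₁ + n₂) i₀ i) •
      fderiv ℝ (fun x => am x i j) 0) (eb (n₁ + n₂) k)
      = -(2 * a' * fderiv ℝ (fun x => bm x i₀ iN) 0 (eb (n₁ + n₂) k)) := by
    intro k
    rw [hPAval i₀ k, hbd00 k, hbswap k]
    ring
  have hPAiN : ∀ k, (∑ i, ∑ j, (Y i * eb (n₁ + n₂) iN j + Y j * eb (n₁ + n₂) iN i) •
      fderiv ℝ (fun x => am x i j) 0) (eb (n₁ + n₂) k)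
      = -(2 * a * fderiv ℝ (fun x => bm x i₀ iN) 0 (eb (n₁ + n₂) k)) := by
    intro k
    rw [hPAval iN k, hbdNN k, hbswap k]
    ring
  have hPBi₀ : ∀ k, (∑ i, ∑ j, (Y i * eb (n₁ + n₂) i₀ j + Y j * eb (n₁ + n₂) i₀ i) •
      fderiv ℝ (fun x => bm x i j) 0) (eb (n₁ + n₂) k)
      = 2 * a' * fderiv ℝ (fun x => bm x i₀ iN) 0 (eb (n₁ + n₂) k) := by
    intro k
    rw [hPBval i₀ k, hbd00 k, hbswap k]
    ring
  have hPBiN : ∀ k, (∑ i, ∑ j, (Y i * eb (n₁ + n₂) iN j + Y j * eb (n₁ + n₂) iN i) •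
      fderiv ℝ (fun x => bm x i j) 0) (eb (n₁ + n₂) k)
      = 2 * a * fderiv ℝ (fun x => bm x i₀ iN) 0 (eb (n₁ + n₂) k) := by
    intro k
    rw [hPBval iN k, hbdNN k, hbswap k]
    ring
  -- values of the mixed sums at x = 0
  have hP0 : ∀ (c : Matrix (Fin (n₁ + n₂)) (Fin (n₁ + n₂)) ℝ) (l : Fin (n₁ + n₂)),
      ∑ i, ∑ j, c i j * (Y i * eb (n₁ + n₂) l j + Y j * eb (n₁ + n₂) l i)
        = a * c i₀ l + a' * c iN l + (a * c l i₀ + a' * c l iN) := by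
    intro c l
    have h1 : ∑ i, ∑ j, c i j * (Y i * eb (n₁ + n₂) l j + Y j * eb (n₁ + n₂) l i)
        = ∑ i, ∑ j, (Y i * eb (n₁ + n₂) l j + Y j * eb (n₁ + n₂) l i) * c i j :=
      Finset.sum_congr rfl fun i _ => Finset.sum_congr rfl fun j _ => by ring
    rw [h1, collapseE l (fun i j => c i j)]
  have hPA0i₀ : ∑ i, ∑ j, am 0 i j * (Y i * eb (n₁ + n₂) i₀ j + Y j * eb (n₁ + n₂) i₀ i)
      = 2 * a := by
    rw [hP0, e1, e2, e3]
    ring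
  have hPA0iN : ∑ i, ∑ j, am 0 i j * (Y i * eb (n₁ + n₂) iN j + Y j * eb (n₁ + n₂) iN i)
      = 0 := by
    rw [hP0, e2, e3, e4]
    ring
  have hPB0i₀ : ∑ i, ∑ j, bm 0 i j * (Y i * eb (n₁ + n₂) i₀ j + Y j * eb (n₁ + n₂) i₀ i)
      = 0 := by
    rw [hP0, f1, f2, f3]
    ring
  have hPB0iN : ∑ i, ∑ j, bm 0 i j * (Y i * eb (n₁ + n₂) iN j + Y j * eb (n₁ + n₂) iN i)
      = 2 * a' := by
    rw [hP0, f2, f3, f4]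
    ring
  -- second derivatives of L at Q0
  have hLQ0 : ContDiffAt ℝ (⊤ : ℕ∞) L Q0 := hLsm.contDiffAt (hVopen.mem_nhds hQ0V)
  have hLQ0fd : HasFDerivAt L (fderiv ℝ L Q0) Q0 :=
    (hLQ0.differentiableAt (by simp)).hasFDerivAt
  have hf''d : HasFDerivAt (fderiv ℝ L) (fderiv ℝ (fderiv ℝ L) Q0) Q0 :=
    ((hLQ0.fderiv_right (m := 1) (WithTop.coe_le_coe.2 le_top)).differentiableAt one_ne_zero).hasFDerivAt
  have hD1fd : HasFDerivAt (D1 L)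
      ((fderiv ℝ L Q0).comp (0 : (ℝ × ℝ) →L[ℝ] (ℝ × ℝ))
        + (fderiv ℝ (fderiv ℝ L) Q0).flip ((1:ℝ), (0:ℝ))) Q0 :=
    hf''d.clm_apply (hasFDerivAt_const ((1:ℝ), (0:ℝ)) Q0)
  have hD2fd : HasFDerivAt (D2 L)
      ((fderiv ℝ L Q0).comp (0 : (ℝ × ℝ) →L[ℝ] (ℝ × ℝ))
        + (fderiv ℝ (fderiv ℝ L) Q0).flip ((0:ℝ), (1:ℝ))) Q0 :=
    hf''d.clm_apply (hasFDerivAt_const ((0:ℝ), (1:ℝ)) Q0)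
  have hdD1 : ∀ v : ℝ × ℝ, fderiv ℝ (D1 L) Q0 v
      = fderiv ℝ (fderiv ℝ L) Q0 v ((1:ℝ), (0:ℝ)) := by
    intro v
    rw [hD1fd.fderiv]
    simp
  have hdD2 : ∀ v : ℝ × ℝ, fderiv ℝ (D2 L) Q0 v
      = fderiv ℝ (fderiv ℝ L) Q0 v ((0:ℝ), (1:ℝ)) := by
    intro v
    rw [hD2fd.fderiv]
    simp
  have hsymm : ∀ v w : ℝ × ℝ, fderiv ℝ (fderiv ℝ L) Q0 v w
      = fderiv ℝ (fderiv ℝ L) Q0 w v := hLQ0.isSymmSndFDerivAt (by simp; exact WithTop.coe_le_coe.2 le_top)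
  -- Euler identities
  have hid : ∀ p : ℝ × ℝ, 0 < p.1 → 0 < p.2 → fderiv ℝ L p p = L p := by
    intro p hp1 hp2
    have hpquad : p ∈ quadrant := by
      refine ⟨le_of_lt hp1, le_of_lt hp2, ?_⟩
      intro h
      rw [h] at hp1
      simp at hp1
    have hpV : p ∈ V := hVsub hpquad
    have hLp : HasFDerivAt L (fderiv ℝ L p) p :=
      ((hLsm.contDiffAt (hVopen.mem_nhds hpV)).differentiableAt (by simp)).hasFDerivAt
    have hc1 : HasDerivAt (fun t : ℝ => t * p.1) p.1 1 := by
      simpa using (hasDerivAt_id (1:ℝ)).mul_const p.1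
    have hc2 : HasDerivAt (fun t : ℝ => t * p.2) p.2 1 := by
      simpa using (hasDerivAt_id (1:ℝ)).mul_const p.2
    have hcurve : HasDerivAt (fun t : ℝ => ((t * p.1, t * p.2) : ℝ × ℝ)) ((p.1, p.2)) 1 :=
      hc1.prodMk hc2
    have hLp' : HasFDerivAt L (fderiv ℝ L p) ((1 : ℝ) * p.1, (1 : ℝ) * p.2) := by
      simpa using hLp
    have hcomp : HasDerivAt (fun t : ℝ => L (t * p.1, t * p.2)) (fderiv ℝ L p ((p.1, p.2))) 1 :=
      hLp'.comp_hasDerivAt 1 hcurve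
    have hlin : HasDerivAt (fun t : ℝ => L (t * p.1, t * p.2)) (L p) 1 := by
      have h0 : HasDerivAt (fun t : ℝ => t * L p) (L p) 1 := by
        simpa using (hasDerivAt_id (1:ℝ)).mul_const (L p)
      apply h0.congr_of_eventuallyEq
      filter_upwards [isOpen_Ioi.mem_nhds (show (0:ℝ) < 1 by norm_num)] with t ht
      exact hLhom t ht p hpquad
    have huni := hcomp.unique hlin
    simpa using huni
  have hEuler : ∀ v : ℝ × ℝ, fderiv ℝ (fderiv ℝ L) Q0 v Q0 = 0 := by
    have hW : IsOpen {p : ℝ × ℝ | 0 < p.1 ∧ 0 < p.2} :=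
      (isOpen_lt continuous_const continuous_fst).inter
        (isOpen_lt continuous_const continuous_snd)
    have hQ0W : Q0 ∈ {p : ℝ × ℝ | 0 < p.1 ∧ 0 < p.2} := by
      rw [hQ0def]
      exact ⟨ha2, ha'2⟩
    have hphi : (fun p : ℝ × ℝ => fderiv ℝ L p p - L p) =ᶠ[𝓝 Q0] (fun _ => (0:ℝ)) := by
      filter_upwards [hW.mem_nhds hQ0W] with p hp
      rw [hid p hp.1 hp.2, sub_self]
    have hA : HasFDerivAt (fun p : ℝ × ℝ => fderiv ℝ L p p)
        ((fderiv ℝ L Q0).comp (ContinuousLinearMap.id ℝ (ℝ × ℝ))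
          + (fderiv ℝ (fderiv ℝ L) Q0).flip Q0) Q0 :=
      hf''d.clm_apply (hasFDerivAt_id Q0)
    have hsub := hA.fun_sub hLQ0fd
    intro v
    have hv : fderiv ℝ (fun p : ℝ × ℝ => fderiv ℝ L p p - L p) Q0 v = 0 := by
      rw [hphi.fderiv_eq]
      simp
    rw [hsub.fderiv] at hv
    simp only [ContinuousLinearMap.sub_apply, ContinuousLinearMap.add_apply,
      ContinuousLinearMap.comp_apply, ContinuousLinearMap.coe_id', id_eq,
      ContinuousLinearMap.flip_apply] at hv
    linarith
  have hQ1 : Q0.1 = a ^ 2 := by rw [hQ0def]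
  have hQ2 : Q0.2 = a' ^ 2 := by rw [hQ0def]
  have hl1' : l1 = fderiv ℝ L Q0 ((1:ℝ), (0:ℝ)) := hl1
  have hl2' : l2 = fderiv ℝ L Q0 ((0:ℝ), (1:ℝ)) := hl2
  have hl12' : l12 = fderiv ℝ (fderiv ℝ L) Q0 ((0:ℝ), (1:ℝ)) ((1:ℝ), (0:ℝ)) := by
    have h : l12 = fderiv ℝ (D1 L) Q0 ((0:ℝ), (1:ℝ)) := hl12
    rw [h, hdD1]
  have hE1 : a ^ 2 * (fderiv ℝ (fderiv ℝ L) Q0 ((1:ℝ), (0:ℝ)) ((1:ℝ), (0:ℝ)))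
      + a' ^ 2 * l12 = 0 := by
    have h := hEuler ((1:ℝ), (0:ℝ))
    rw [clm_R2 (fderiv ℝ (fderiv ℝ L) Q0 ((1:ℝ), (0:ℝ))) Q0, hQ1, hQ2] at h
    rw [hl12', hsymm ((0:ℝ), (1:ℝ)) ((1:ℝ), (0:ℝ))]
    linarith
  have hE2 : a ^ 2 * l12
      + a' ^ 2 * (fderiv ℝ (fderiv ℝ L) Q0 ((0:ℝ), (1:ℝ)) ((0:ℝ), (1:ℝ))) = 0 := by
    have h := hEuler ((0:ℝ), (1:ℝ))
    rw [clm_R2 (fderiv ℝ (fderiv ℝ L) Q0 ((0:ℝ), (1:ℝ))) Q0, hQ1, hQ2] at h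
    rw [hl12']
    linarith
  have hsym2 : fderiv ℝ (fderiv ℝ L) Q0 ((1:ℝ), (0:ℝ)) ((0:ℝ), (1:ℝ)) = l12 := by
    rw [hsymm ((1:ℝ), (0:ℝ)) ((0:ℝ), (1:ℝ)), ← hl12']
  -- the main second-derivative formula
  have hQpair : HasFDerivAt (fun x => ((∑ i, ∑ j, am x i j * Y i * Y j,
      ∑ i, ∑ j, bm x i j * Y i * Y j) : ℝ × ℝ)) (DQa.prod DQb) 0 := hQa.prodMk hQb
  have hpair0 : ((∑ i, ∑ j, am 0 i j * Y i * Y j,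
      ∑ i, ∑ j, bm 0 i j * Y i * Y j) : ℝ × ℝ) = Q0 := by
    rw [hqA0, hqB0]
  have hD1fd0 : HasFDerivAt (D1 L) (fderiv ℝ (D1 L) Q0)
      ((∑ i, ∑ j, am 0 i j * Y i * Y j, ∑ i, ∑ j, bm 0 i j * Y i * Y j) : ℝ × ℝ) := by
    rw [hpair0]
    exact hD1fd.differentiableAt.hasFDerivAt
  have hD2fd0 : HasFDerivAt (D2 L) (fderiv ℝ (D2 L) Q0)
      ((∑ i, ∑ j, am 0 i j * Y i * Y j, ∑ i, ∑ j, bm 0 i j * Y i * Y j) : ℝ × ℝ) := by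
    rw [hpair0]
    exact hD2fd.differentiableAt.hasFDerivAt
  have hg1 : HasFDerivAt (fun x => D1 L ((∑ i, ∑ j, am x i j * Y i * Y j,
      ∑ i, ∑ j, bm x i j * Y i * Y j) : ℝ × ℝ)) ((fderiv ℝ (D1 L) Q0).comp (DQa.prod DQb)) 0 :=
    by have := hD1fd0.comp 0 hQpair; exact this
  have hg2 : HasFDerivAt (fun x => D2 L ((∑ i, ∑ j, am x i j * Y i * Y j,
      ∑ i, ∑ j, bm x i j * Y i * Y j) : ℝ × ℝ)) ((fderiv ℝ (D2 L) Q0).comp (DQa.prod DQb)) 0 :=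
    by have := hD2fd0.comp 0 hQpair; exact this
  have key : ∀ (l k : Fin (n₁ + n₂)),
      pd (fun x => pd (fun w => FF (n₁ + n₂) L am bm x w ^ 2) l Y) k 0
        = D1 L Q0 * ((∑ i, ∑ j, (Y i * eb (n₁ + n₂) l j + Y j * eb (n₁ + n₂) l i) •
              fderiv ℝ (fun x => am x i j) 0) (eb (n₁ + n₂) k))
          + (∑ i, ∑ j, am 0 i j * (Y i * eb (n₁ + n₂) l j + Y j * eb (n₁ + n₂) l i))
            * (fderiv ℝ (D1 L) Q0 (DQa (eb (n₁ + n₂) k), DQb (eb (n₁ + n₂) k)))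
          + (D2 L Q0 * ((∑ i, ∑ j, (Y i * eb (n₁ + n₂) l j + Y j * eb (n₁ + n₂) l i) •
              fderiv ℝ (fun x => bm x i j) 0) (eb (n₁ + n₂) k))
          + (∑ i, ∑ j, bm 0 i j * (Y i * eb (n₁ + n₂) l j + Y j * eb (n₁ + n₂) l i))
            * (fderiv ℝ (D2 L) Q0 (DQa (eb (n₁ + n₂) k), DQb (eb (n₁ + n₂) k)))) := by
    intro l k
    have hveq : (fun x => pd (fun w => FF (n₁ + n₂) L am bm x w ^ 2) l Y) =ᶠ[𝓝 0]
        (fun x => D1 L ((∑ i, ∑ j, am x i j * Y i * Y j,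
            ∑ i, ∑ j, bm x i j * Y i * Y j) : ℝ × ℝ)
            * (∑ i, ∑ j, am x i j * (Y i * eb (n₁ + n₂) l j + Y j * eb (n₁ + n₂) l i))
          + D2 L ((∑ i, ∑ j, am x i j * Y i * Y j,
            ∑ i, ∑ j, bm x i j * Y i * Y j) : ℝ × ℝ)
            * (∑ i, ∑ j, bm x i j * (Y i * eb (n₁ + n₂) l j + Y j * eb (n₁ + n₂) l i))) := by
      filter_upwards [hWx] with x hx using stepI x hx l
    have htot := (hg1.mul (hPAfd l)).add (hg2.mul (hPBfd l))
    have hfd : fderiv ℝ (fun x =>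
        D1 L ((∑ i, ∑ j, am x i j * Y i * Y j, ∑ i, ∑ j, bm x i j * Y i * Y j) : ℝ × ℝ)
          * (∑ i, ∑ j, am x i j * (Y i * eb (n₁ + n₂) l j + Y j * eb (n₁ + n₂) l i))
        + D2 L ((∑ i, ∑ j, am x i j * Y i * Y j, ∑ i, ∑ j, bm x i j * Y i * Y j) : ℝ × ℝ)
          * (∑ i, ∑ j, bm x i j * (Y i * eb (n₁ + n₂) l j + Y j * eb (n₁ + n₂) l i))) 0
        = ((D1 L ((∑ i, ∑ j, am 0 i j * Y i * Y j,
              ∑ i, ∑ j, bm 0 i j * Y i * Y j) : ℝ × ℝ))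
            • (∑ i, ∑ j, (Y i * eb (n₁ + n₂) l j + Y j * eb (n₁ + n₂) l i) •
              fderiv ℝ (fun x => am x i j) 0)
          + (∑ i, ∑ j, am 0 i j * (Y i * eb (n₁ + n₂) l j + Y j * eb (n₁ + n₂) l i))
            • ((fderiv ℝ (D1 L) Q0).comp (DQa.prod DQb)))
          + ((D2 L ((∑ i, ∑ j, am 0 i j * Y i * Y j,
              ∑ i, ∑ j, bm 0 i j * Y i * Y j) : ℝ × ℝ))
            • (∑ i, ∑ j, (Y i * eb (n₁ + n₂) l j + Y j * eb (n₁ + n₂) l i) •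
              fderiv ℝ (fun x => bm x i j) 0)
          + (∑ i, ∑ j, bm 0 i j * (Y i * eb (n₁ + n₂) l j + Y j * eb (n₁ + n₂) l i))
            • ((fderiv ℝ (D2 L) Q0).comp (DQa.prod DQb))) := htot.fderiv
    rw [pd, hveq.fderiv_eq, hfd, hpair0]
    simp only [ContinuousLinearMap.add_apply, ContinuousLinearMap.smul_apply,
      ContinuousLinearMap.comp_apply, ContinuousLinearMap.prod_apply, smul_eq_mul]
  -- evaluating the directional second derivatives of L
  have hdval1 : ∀ k, fderiv ℝ (D1 L) Q0 (DQa (eb (n₁ + n₂) k), DQb (eb (n₁ + n₂) k))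
      = 2 * (a * a') * (l12 - fderiv ℝ (fderiv ℝ L) Q0 ((1:ℝ), (0:ℝ)) ((1:ℝ), (0:ℝ)))
        * fderiv ℝ (fun x => bm x i₀ iN) 0 (eb (n₁ + n₂) k) := by
    intro k
    rw [clm_R2 (fderiv ℝ (D1 L) Q0), hdD1, hdD1]
    dsimp only
    rw [hDQaval k, hDQbval k, ← hl12']
    ring
  have hdval2 : ∀ k, fderiv ℝ (D2 L) Q0 (DQa (eb (n₁ + n₂) k), DQb (eb (n₁ + n₂) k))
      = 2 * (a * a') * (fderiv ℝ (fderiv ℝ L) Q0 ((0:ℝ), (1:ℝ)) ((0:ℝ), (1:ℝ)) - l12)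
        * fderiv ℝ (fun x => bm x i₀ iN) 0 (eb (n₁ + n₂) k) := by
    intro k
    rw [clm_R2 (fderiv ℝ (D2 L) Q0), hdD2, hdD2]
    dsimp only
    rw [hDQaval k, hDQbval k, hsym2]
    ring
  have hterm1 : ∀ k, pd (fun x => pd (fun w => FF (n₁ + n₂) L am bm x w ^ 2) i₀ Y) k 0
      = (2 * a' * (l2 - l1) + 4 * a ^ 2 * a' *
          (l12 - fderiv ℝ (fderiv ℝ L) Q0 ((1:ℝ), (0:ℝ)) ((1:ℝ), (0:ℝ))))
        * fderiv ℝ (fun x => bm x i₀ iN) 0 (eb (n₁ + n₂) k) := by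
    intro k
    rw [key i₀ k, hPAi₀ k, hPBi₀ k, hPA0i₀, hPB0i₀, hdval1 k, hdval2 k, ← hl1, ← hl2]
    ring
  have hterm2 : ∀ k, pd (fun x => pd (fun w => FF (n₁ + n₂) L am bm x w ^ 2) iN Y) k 0
      = (2 * a * (l2 - l1) + 4 * a * a' ^ 2 *
          (fderiv ℝ (fderiv ℝ L) Q0 ((0:ℝ), (1:ℝ)) ((0:ℝ), (1:ℝ)) - l12))
        * fderiv ℝ (fun x => bm x i₀ iN) 0 (eb (n₁ + n₂) k) := by
    intro k
    rw [key iN k, hPAiN k, hPBiN k, hPA0iN, hPB0iN, hdval1 k, hdval2 k, ← hl1, ← hl2]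
    ring
  have hA₁' : A₁ = fderiv ℝ (fun x => bm x i₀ iN) 0 (eb (n₁ + n₂) i₀) := hA₁
  have hA₂' : A₂ = fderiv ℝ (fun x => bm x i₀ iN) 0 (eb (n₁ + n₂) iN) := hA₂
  have hsum1 : ∑ k, pd (fun x => pd (fun w => FF (n₁ + n₂) L am bm x w ^ 2) i₀ Y) k 0 * Y k
      = (2 * a' * (l2 - l1) + 4 * a ^ 2 * a' *
          (l12 - fderiv ℝ (fderiv ℝ L) Q0 ((1:ℝ), (0:ℝ)) ((1:ℝ), (0:ℝ))))
        * (a * A₁ + a' * A₂) := by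
    have h1 : ∀ k, pd (fun x => pd (fun w => FF (n₁ + n₂) L am bm x w ^ 2) i₀ Y) k 0 * Y k
        = Y k * ((2 * a' * (l2 - l1) + 4 * a ^ 2 * a' *
            (l12 - fderiv ℝ (fderiv ℝ L) Q0 ((1:ℝ), (0:ℝ)) ((1:ℝ), (0:ℝ))))
          * fderiv ℝ (fun x => bm x i₀ iN) 0 (eb (n₁ + n₂) k)) := by
      intro k
      rw [hterm1 k]
      ring
    rw [Finset.sum_congr rfl fun k _ => h1 k,
      sumY (fun k => (2 * a' * (l2 - l1) + 4 * a ^ 2 * a' *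
        (l12 - fderiv ℝ (fderiv ℝ L) Q0 ((1:ℝ), (0:ℝ)) ((1:ℝ), (0:ℝ))))
        * fderiv ℝ (fun x => bm x i₀ iN) 0 (eb (n₁ + n₂) k)), ← hA₁', ← hA₂']
    ring
  have hsum2 : ∑ k, pd (fun x => pd (fun w => FF (n₁ + n₂) L am bm x w ^ 2) iN Y) k 0 * Y k
      = (2 * a * (l2 - l1) + 4 * a * a' ^ 2 *
          (fderiv ℝ (fderiv ℝ L) Q0 ((0:ℝ), (1:ℝ)) ((0:ℝ), (1:ℝ)) - l12))
        * (a * A₁ + a' * A₂) := by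
    have h1 : ∀ k, pd (fun x => pd (fun w => FF (n₁ + n₂) L am bm x w ^ 2) iN Y) k 0 * Y k
        = Y k * ((2 * a * (l2 - l1) + 4 * a * a' ^ 2 *
            (fderiv ℝ (fderiv ℝ L) Q0 ((0:ℝ), (1:ℝ)) ((0:ℝ), (1:ℝ)) - l12))
          * fderiv ℝ (fun x => bm x i₀ iN) 0 (eb (n₁ + n₂) k)) := by
      intro k
      rw [hterm2 k]
      ring
    rw [Finset.sum_congr rfl fun k _ => h1 k,
      sumY (fun k => (2 * a * (l2 - l1) + 4 * a * a' ^ 2 *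
        (fderiv ℝ (fderiv ℝ L) Q0 ((0:ℝ), (1:ℝ)) ((0:ℝ), (1:ℝ)) - l12))
        * fderiv ℝ (fun x => bm x i₀ iN) 0 (eb (n₁ + n₂) k)), ← hA₁', ← hA₂']
    ring
  -- the pure x-derivative
  have hxpart : ∀ l, pd (fun x => FF (n₁ + n₂) L am bm x Y ^ 2) l 0
      = 2 * (a * a') * (l2 - l1) * fderiv ℝ (fun x => bm x i₀ iN) 0 (eb (n₁ + n₂) l) := by
    intro l
    have hfeq : (fun x => FF (n₁ + n₂) L am bm x Y ^ 2) =ᶠ[𝓝 0]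
        (fun x => L ((∑ i, ∑ j, am x i j * Y i * Y j,
          ∑ i, ∑ j, bm x i j * Y i * Y j) : ℝ × ℝ)) := by
      filter_upwards [hWx] with x hx using hsq x hx Y hYWy
    have hLfd0 : HasFDerivAt L (fderiv ℝ L Q0)
        ((∑ i, ∑ j, am 0 i j * Y i * Y j, ∑ i, ∑ j, bm 0 i j * Y i * Y j) : ℝ × ℝ) := by
      rw [hpair0]
      exact hLQ0fd
    have hcomp := hLfd0.comp 0 hQpair
    have hfd : fderiv ℝ (fun x => L ((∑ i, ∑ j, am x i j * Y i * Y j,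
        ∑ i, ∑ j, bm x i j * Y i * Y j) : ℝ × ℝ)) 0
        = (fderiv ℝ L Q0).comp (DQa.prod DQb) := hcomp.fderiv
    rw [pd, hfeq.fderiv_eq, hfd, ContinuousLinearMap.comp_apply,
      ContinuousLinearMap.prod_apply, clm_R2 (fderiv ℝ L Q0)]
    dsimp only
    rw [hDQaval l, hDQbval l, ← hl1', ← hl2']
    ring
  constructor
  · rw [hGl i₀, hsum1, hxpart i₀, ← hA₁']
    linear_combination (-(a * a' * A₁) - a' ^ 2 * A₂) * hE1
      + (a * a' * l12 * A₁ + a' ^ 2 * l12 * A₂) * hnorm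
  · rw [hGl iN, hsum2, hxpart iN, ← hA₂']
    linear_combination (a ^ 2 * A₁ + a * a' * A₂) * hE2
      + (-(a ^ 2 * l12 * A₁) - a * a' * l12 * A₂) * hnorm
end
end
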